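/- arXiv:1812.01800 — 7 statements merged into one kernel-verified Lean document; each statement's English description precedes it below -/
import Mathlib

section
/- Every local tournament in which every vertex has in-degree at least one has at least two distinct Sullivan-1 vertices. -/
/-- The out-neighbourhood of `x` in the digraph with arc relation `A`. -/
def Nplus {V : Type*} (A : V → V → Prop) (x : V) : Set V := {y | A x y}

/-- The in-neighbourhood of `x`. -/
def Nminus {V : Type*} (A : V → V → Prop) (x : V) : Set V := {y | A y x}

/-- The second out-neighbourhood of `x`:
`(⋃ u ∈ N⁺(x), N⁺(u)) \ N⁺(x)`. -/
def Nsecond {V : Type*} (A : V → V → Prop) (x : V) : Set V :=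
  (⋃ u ∈ Nplus A x, Nplus A u) \ Nplus A x

/-- Out-degree `d⁺(x)`. -/
noncomputable def dplus {V : Type*} (A : V → V → Prop) (x : V) : ℕ := (Nplus A x).ncard

/-- In-degree `d⁻(x)`. -/
noncomputable def dminus {V : Type*} (A : V → V → Prop) (x : V) : ℕ := (Nminus A x).ncard

/-- Second out-degree `d⁺⁺(x)`. -/
noncomputable def dsecond {V : Type*} (A : V → V → Prop) (x : V) : ℕ := (Nsecond A x).ncard

/-- `x` is a Sullivan-1 vertex: `d⁺⁺(x) ≥ d⁻(x)`. -/
def Sullivan1 {V : Type*} (A : V → V → Prop) (x : V) : Prop :=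
  dminus A x ≤ dsecond A x

/-- `x` is a Sullivan-2 vertex: `d⁺⁺(x) + d⁺(x) ≥ 2·d⁻(x)`. -/
def Sullivan2 {V : Type*} (A : V → V → Prop) (x : V) : Prop :=
  2 * dminus A x ≤ dsecond A x + dplus A x

/-- Two vertices are adjacent if there is an arc between them in some direction. -/
def Adjacent {V : Type*} (A : V → V → Prop) (x y : V) : Prop := A x y ∨ A y x

/-- An oriented graph: no loops and no 2-cycles. -/
def IsOriented {V : Type*} (A : V → V → Prop) : Prop :=
  (∀ x, ¬ A x x) ∧ ∀ x y, A x y → ¬ A y x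

/-- A local tournament: an oriented graph in which any two distinct out-neighbours
of a vertex are adjacent, and any two distinct in-neighbours are adjacent. -/
def IsLocalTournament {V : Type*} (A : V → V → Prop) : Prop :=
  IsOriented A ∧
  (∀ x y z, A x y → A x z → y ≠ z → Adjacent A y z) ∧
  (∀ x y z, A y x → A z x → y ≠ z → Adjacent A y z)

/-- A tournament: an oriented graph in which any two distinct vertices are adjacent. -/
def IsTournament {V : Type*} (A : V → V → Prop) : Prop :=
  IsOriented A ∧ ∀ x y : V, x ≠ y → Adjacent A x y

/-- A digraph is strong if every vertex can reach every other by a directed path. -/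
def IsStrong {V : Type*} (A : V → V → Prop) : Prop :=
  ∀ x y : V, Relation.ReflTransGen A x y

/-- A digraph on `ZMod r` is roundly labelled (by the natural labelling `0,1,…,r-1`)
if for each vertex `i` the out-neighbourhood is `{i+1, …, i+d⁺(i)}` and the
in-neighbourhood is `{i−d⁻(i), …, i−1}` (indices modulo `r`). -/
def IsRoundLabelling {r : ℕ} (B : ZMod r → ZMod r → Prop) : Prop :=
  ∀ i : ZMod r,
    Nplus B i = (fun t : ℕ => i + (t : ZMod r)) '' Set.Icc 1 (dplus B i) ∧
    Nminus B i = (fun t : ℕ => i - (t : ZMod r)) '' Set.Icc 1 (dminus B i)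

/-- A digraph is round if its vertices admit a round labelling. -/
def IsRound {V : Type*} (A : V → V → Prop) : Prop :=
  ∃ r : ℕ, 0 < r ∧ ∃ e : ZMod r ≃ V,
    IsRoundLabelling (fun i j => A (e i) (e j))

/-- A digraph `A` on `V` is round decomposable: `A = R[S₁,…,S_r]` where `R` is a
round local tournament on `r ≥ 2` vertices (realized on `ZMod r`), the parts are
the fibres of a surjection `φ : V → ZMod r` (so all parts are nonempty and pairwise
disjoint), arcs between distinct parts are exactly those induced by `R`, and each
part induces a strong tournament. -/
def IsRoundDecomposable {V : Type*} (A : V → V → Prop) : Prop :=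
  ∃ (r : ℕ) (B : ZMod r → ZMod r → Prop) (φ : V → ZMod r),
    2 ≤ r ∧ IsLocalTournament B ∧ IsRound B ∧ Function.Surjective φ ∧
    (∀ x y, φ x ≠ φ y → (A x y ↔ B (φ x) (φ y))) ∧
    (∀ x y, φ x = φ y → x ≠ y → Adjacent A x y) ∧
    (∀ i : ZMod r, ∀ x y, φ x = i → φ y = i →
      Relation.ReflTransGen (fun a b => A a b ∧ φ a = i ∧ φ b = i) x y)

/-!
Passing to a minimal nonempty set of vertices closed under in-neighbours, we may assume that
the local tournament is strong; it then suffices to find, for every vertex `s`, a Sullivan-1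
vertex other than `s`. Put `b(v) = d⁺(v) + d⁺⁺(v)`. A king `y` of the tournament `N⁻(v)` reaches
`v`, `N⁺(v)` and `N⁻(v) - y` in at most two steps, so `b(y) ≥ d⁺(v) + d⁻(v) > b(v)` when `v` is
not Sullivan-1. If no vertex but `s` is Sullivan-1 and `v` maximizes `b` off `s`, then `s` is
the only king of `N⁻(v)`, hence dominates `N⁻[v]`, and a king `y` of `N⁻(v) - s` again maximizes
`b` off `s`, with the count forcing `N⁺(y) ∪ N⁺⁺(y) ⊆ N[v] - s`. Along a set of such maximizers
each arising from another one, the sets `N[v] - s` have a union closed under out-arcs that misses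
`s`, contradicting strong connectivity.
-/

open Set

lemma Set.Nonempty.exists_subset_forall_exists_rel {α : Type*} [Finite α] {P : Set α}
    {r : α → α → Prop} (hP : P.Nonempty) (h : ∀ v ∈ P, ∃ w ∈ P, r v w) :
    ∃ Q ⊆ P, Q.Nonempty ∧ ∀ w ∈ Q, ∃ v ∈ Q, r v w := by
  obtain ⟨Q, hQP, ⟨hQne, hQ⟩, hmin⟩ := _root_.Finite.exists_le_minimal
    (p := fun T : Set α => T.Nonempty ∧ ∀ v ∈ T, ∃ w ∈ T, r v w) ⟨hP, h⟩
  refine ⟨Q, hQP, hQne, fun w hw => ?_⟩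
  by_contra! hno
  -- removing a vertex without predecessor keeps every other vertex's successor
  have hsucc : ∀ v ∈ Q, ∃ u ∈ Q \ {w}, r v u := fun v hv =>
    let ⟨u, hu, hvu⟩ := hQ v hv
    ⟨u, ⟨hu, fun huw => hno v hv (huw ▸ hvu)⟩, hvu⟩
  obtain ⟨u, hu, -⟩ := hsucc w hw
  have := hmin ⟨⟨u, hu⟩, fun v hv => hsucc v hv.1⟩ sdiff_subset hw
  exact this.2 rfl

section Digraph

variable {V : Type*} {A : V → V → Prop}

def Nle2 (A : V → V → Prop) (x : V) : Set V := Nplus A x ∪ Nsecond A x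

def Nclosed (A : V → V → Prop) (x : V) : Set V := insert x (Nplus A x ∪ Nminus A x)

def IsKingOf (A : V → V → Prop) (T : Set V) (y : V) : Prop :=
  y ∈ T ∧ ∀ z ∈ T, z ≠ y → A y z ∨ ∃ w ∈ T, A y w ∧ A w z

lemma mem_Nle2_of_arc_of_arc {x u z : V} (hxu : A x u) (huz : A u z) : z ∈ Nle2 A x := by
  by_cases hz : z ∈ Nplus A x
  · exact Or.inl hz
  · exact Or.inr ⟨mem_biUnion hxu huz, hz⟩

lemma IsKingOf.insert_union_subset_Nle2 {B : Set V} {v y : V} (hy : IsKingOf A B y)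
    (hB : B ⊆ Nminus A v) : insert v (Nplus A v ∪ (B \ {y})) ⊆ Nle2 A y := by
  rintro z (rfl | hz | ⟨hz, hzy⟩)
  · exact Or.inl (hB hy.1)
  · exact mem_Nle2_of_arc_of_arc (hB hy.1) hz
  · rcases hy.2 z hz hzy with h | ⟨w, -, hyw, hwz⟩
    · exact Or.inl h
    · exact mem_Nle2_of_arc_of_arc hyw hwz

lemma IsLocalTournament.pairwise_adjacent_Nminus (hA : IsLocalTournament A) (v : V) :
    (Nminus A v).Pairwise (Adjacent A) :=
  fun _ ha _ hb hab => hA.2.2 v _ _ ha hb hab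

lemma IsLocalTournament.comap {W : Type*} (hA : IsLocalTournament A) {f : W → V}
    (hf : Function.Injective f) : IsLocalTournament (fun a b => A (f a) (f b)) :=
  ⟨⟨fun _ => hA.1.1 _, fun _ _ => hA.1.2 _ _⟩,
    fun _ _ _ h₁ h₂ hyz => hA.2.1 _ _ _ h₁ h₂ (hf.ne hyz),
    fun _ _ _ h₁ h₂ hyz => hA.2.2 _ _ _ h₁ h₂ (hf.ne hyz)⟩

lemma image_Nminus_comap {W : Type*} {f : W → V} {w : W}
    (hw : ∀ y, A y (f w) → y ∈ range f) :
    f '' Nminus (fun a b => A (f a) (f b)) w = Nminus A (f w) := by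
  refine Subset.antisymm (image_subset_iff.mpr fun _ h => h) fun y hy => ?_
  obtain ⟨y', rfl⟩ := hw y hy
  exact ⟨y', hy, rfl⟩

lemma image_Nsecond_comap_subset {W : Type*} (f : W → V) (w : W) :
    f '' Nsecond (fun a b => A (f a) (f b)) w ⊆ Nsecond A (f w) := by
  rintro _ ⟨z, ⟨hz, hwz⟩, rfl⟩
  obtain ⟨u, hu, huz⟩ := mem_iUnion₂.mp hz
  exact ⟨mem_biUnion (x := f u) hu huz, hwz⟩

lemma IsStrong.mem_of_forall_arc_mem (hS : IsStrong A) {C : Set V}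
    (hC : ∀ x ∈ C, ∀ z, A x z → z ∈ C) {x : V} (hx : x ∈ C) (y : V) : y ∈ C := by
  induction hS x y with
  | refl => exact hx
  | tail _ hyz ih => exact hC _ ih _ hyz

lemma exists_isStrong_inClosed [Finite V] [Nonempty V] (A : V → V → Prop) :
    ∃ S : Set V, S.Nonempty ∧ (∀ x ∈ S, ∀ y, A y x → y ∈ S) ∧
      IsStrong (fun a b : S => A a b) := by
  obtain ⟨S, -, ⟨hSne, hS⟩, hmin⟩ := _root_.Finite.exists_le_minimal
    (p := fun T : Set V => T.Nonempty ∧ ∀ x ∈ T, ∀ y, A y x → y ∈ T)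
    (a := univ) ⟨univ_nonempty, fun _ _ _ _ => mem_univ _⟩
  refine ⟨S, hSne, hS, fun a b => ?_⟩
  let T : Set V :=
    {x | ∃ hx : x ∈ S, Relation.ReflTransGen (fun a b : S => A a b) ⟨x, hx⟩ b}
  have hT : T.Nonempty ∧ ∀ x ∈ T, ∀ y, A y x → y ∈ T := by
    refine ⟨⟨b, b.2, .refl⟩, fun x ⟨hxS, hxb⟩ y hyx => ⟨hS x hxS y hyx, ?_⟩⟩
    exact .head (show A y x from hyx) hxb
  obtain ⟨_, hab⟩ := hmin hT (fun x hx => hx.1) a.2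
  exact hab

lemma IsLocalTournament.eq_empty_of_isStrong (hA : IsLocalTournament A) (hS : IsStrong A)
    {s : V} {Q : Set V}
    (hdom : ∀ w ∈ Q, A s w ∧ ∀ x ∈ Nminus A w, x ≠ s → A s x)
    (hpred : ∀ w ∈ Q, ∃ w' ∈ Q, Nle2 A w ⊆ Nclosed A w' \ {s}) : Q = ∅ := by
  -- `R` is closed under out-arcs but misses `s`
  let R := ⋃ w ∈ Q, Nclosed A w \ {s}
  have hR : ∀ x ∈ R, ∀ z, A x z → z ∈ R := by
    intro x hx z hxz
    obtain ⟨w, hw, hxw, hxs⟩ := mem_iUnion₂.mp hx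
    obtain ⟨hsw, hsN⟩ := hdom w hw
    rcases hxw with rfl | hx | hx
    · exact mem_biUnion hw ⟨Or.inr (Or.inl hxz), fun h => hA.1.2 s x hsw (h ▸ hxz)⟩
    · obtain ⟨w', hw', hsub⟩ := hpred w hw
      exact mem_biUnion hw' (hsub (mem_Nle2_of_arc_of_arc hx hxz))
    · have hzs : z ≠ s := fun h => hA.1.2 s x (hsN x hx hxs) (h ▸ hxz)
      refine mem_biUnion hw ⟨?_, hzs⟩
      by_cases hzw : z = w
      · exact hzw ▸ mem_insert z _
      · rcases hA.2.1 x w z hx hxz (Ne.symm hzw) with h | h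
        exacts [Or.inr (Or.inl h), Or.inr (Or.inr h)]
  by_contra! ⟨w, hw⟩
  have hs := hS.mem_of_forall_arc_mem hR
    (mem_biUnion hw ⟨mem_insert w _, fun h => hA.1.1 s (h ▸ (hdom w hw).1)⟩) s
  exact (mem_iUnion₂.mp hs).elim fun _ ⟨_, _, hss⟩ => hss rfl

section Finite

variable [Finite V]

lemma ncard_Nle2 (A : V → V → Prop) (x : V) : (Nle2 A x).ncard = dplus A x + dsecond A x :=
  ncard_union_eq disjoint_sdiff_right

lemma Sullivan1.of_comap {W : Type*} {f : W → V} (hf : Function.Injective f) {w : W}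
    (hw : ∀ y, A y (f w) → y ∈ range f) (h : Sullivan1 (fun a b => A (f a) (f b)) w) :
    Sullivan1 A (f w) :=
  calc dminus A (f w)
      = (f '' Nminus (fun a b => A (f a) (f b)) w).ncard := by rw [image_Nminus_comap hw]; rfl
    _ ≤ (f '' Nsecond (fun a b => A (f a) (f b)) w).ncard := by
        rw [ncard_image_of_injective _ hf, ncard_image_of_injective _ hf]; exact h
    _ ≤ dsecond A (f w) := ncard_le_ncard (image_Nsecond_comap_subset f w)

lemma exists_isKingOf (hirr : ∀ x, ¬ A x x) {T : Set V} (hT : T.Nonempty)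
    (hadj : T.Pairwise (Adjacent A)) : ∃ y, IsKingOf A T y := by
  obtain ⟨y, hyT, hmax⟩ := exists_max_image T (fun y => (T ∩ Nplus A y).ncard) (toFinite T) hT
  refine ⟨y, hyT, fun z hzT hzy => ?_⟩
  by_contra! ⟨hyz, hpath⟩
  have hzy' : A z y := (hadj hzT hyT hzy).resolve_right hyz
  -- `z` would beat `y` and everything `y` beats, so `y` would not have maximal out-degree in `T`
  have hsub : insert y (T ∩ Nplus A y) ⊆ T ∩ Nplus A z := by
    rintro w (rfl | ⟨hwT, hyw⟩)
    · exact ⟨hyT, hzy'⟩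
    · exact ⟨hwT, (hadj hzT hwT (by rintro rfl; exact hyz hyw)).resolve_right
        (hpath w hwT hyw)⟩
  have := ncard_le_ncard hsub
  rw [ncard_insert_of_notMem (fun h => hirr y h.2)] at this
  exact absurd (hmax z hzT) (by omega)

lemma arc_of_forall_isKingOf_eq (hirr : ∀ x, ¬ A x x) {T : Set V}
    (hadj : T.Pairwise (Adjacent A)) {s : V} (hs : ∀ y, IsKingOf A T y → y = s) {x : V}
    (hx : x ∈ T) (hxs : x ≠ s) : A s x := by
  have hsT : s ∈ T := by
    obtain ⟨y, hy⟩ := exists_isKingOf hirr ⟨x, hx⟩ hadj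
    exact hs y hy ▸ hy.1
  by_contra hsx
  let Z := {z ∈ T | A z s}
  obtain ⟨z, hzZ, hz⟩ := exists_isKingOf (T := Z) hirr
    ⟨x, hx, (hadj hx hsT hxs).resolve_right hsx⟩ (hadj.mono (sep_subset T _))
  -- a king of the vertices beating `s` is a king of `T`, through `s` if necessary
  have hzT : IsKingOf A T z := by
    refine ⟨hzZ.1, fun t ht htz => ?_⟩
    by_cases htZ : t ∈ Z
    · rcases hz t htZ htz with h | ⟨w, hw, h⟩
      exacts [Or.inl h, Or.inr ⟨w, hw.1, h⟩]
    · by_cases hts : t = s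
      · exact Or.inl (hts ▸ hzZ.2)
      · exact Or.inr ⟨s, hsT, hzZ.2, (hadj ht hsT hts).resolve_left fun h => htZ ⟨ht, h⟩⟩
  have hzs := hzZ.2
  rw [hs z hzT] at hzs
  exact hirr s hzs

namespace IsOriented

variable (hA : IsOriented A)
include hA

lemma ncard_insert_union {B : Set V} {v y : V} (hB : B ⊆ Nminus A v) (hy : y ∈ B) :
    (insert v (Nplus A v ∪ (B \ {y}))).ncard = dplus A v + B.ncard := by
  have hdisj : Disjoint (Nplus A v) (B \ {y}) :=
    disjoint_left.mpr fun z hz hz' => hA.2 v z hz (hB hz'.1)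
  have hv : v ∉ Nplus A v ∪ (B \ {y}) := by
    rintro (h | ⟨h, -⟩)
    exacts [hA.1 v h, hA.1 v (hB h)]
  rw [ncard_insert_of_notMem hv, ncard_union_eq hdisj, ncard_sdiff_singleton_of_mem hy]
  have := (ncard_pos (toFinite B)).mpr ⟨y, hy⟩
  unfold dplus
  omega

lemma dplus_add_ncard_le {B : Set V} {v y : V} (hB : B ⊆ Nminus A v) (hy : IsKingOf A B y) :
    dplus A v + B.ncard ≤ (Nle2 A y).ncard :=
  hA.ncard_insert_union hB hy.1 ▸ ncard_le_ncard (hy.insert_union_subset_Nle2 hB)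

lemma Nle2_eq_of_ncard_le {B : Set V} {v y : V} (hB : B ⊆ Nminus A v) (hy : IsKingOf A B y)
    (hle : (Nle2 A y).ncard ≤ dplus A v + B.ncard) :
    Nle2 A y = insert v (Nplus A v ∪ (B \ {y})) :=
  (eq_of_subset_of_ncard_le (hy.insert_union_subset_Nle2 hB)
    (hA.ncard_insert_union hB hy.1 ▸ hle)).symm

lemma ncard_Nle2_lt_of_not_sullivan1 {v y : V} (hv : ¬ Sullivan1 A v)
    (hy : IsKingOf A (Nminus A v) y) : (Nle2 A v).ncard < (Nle2 A y).ncard := by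
  have := hA.dplus_add_ncard_le subset_rfl hy
  rw [ncard_Nle2]
  unfold Sullivan1 dminus at *
  omega

lemma ncard_Nle2_eq_and_subset {s v y : V} (hsv : A s v) (hv : ¬ Sullivan1 A v)
    (hy : IsKingOf A (Nminus A v \ {s}) y) (hle : (Nle2 A y).ncard ≤ (Nle2 A v).ncard) :
    (Nle2 A y).ncard = (Nle2 A v).ncard ∧ Nle2 A y ⊆ Nclosed A v \ {s} := by
  have hB := ncard_sdiff_singleton_add_one (show s ∈ Nminus A v from hsv)
  have hge := hA.dplus_add_ncard_le sdiff_subset hy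
  rw [ncard_Nle2 A v] at hle ⊢
  unfold Sullivan1 dminus at hv
  refine ⟨by omega, ?_⟩
  rw [hA.Nle2_eq_of_ncard_le sdiff_subset hy (by omega)]
  rintro z (rfl | hz | ⟨⟨hz, hzs⟩, -⟩)
  · exact ⟨mem_insert _ _, fun h => hA.1 s (h ▸ hsv)⟩
  · exact ⟨Or.inr (Or.inl hz), fun h => hA.2 s v hsv (h ▸ hz)⟩
  · exact ⟨Or.inr (Or.inr hz), hzs⟩

lemma nonempty_Nminus_diff_of_isStrong (hS : IsStrong A) {s v : V} (hsv : A s v)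
    (hv : ¬ Sullivan1 A v) : (Nminus A v \ {s}).Nonempty := by
  by_contra hemp
  have hNm : dminus A v ≤ 1 :=
    (ncard_le_ncard (sdiff_eq_empty.mp (not_nonempty_iff_eq_empty.mp hemp))).trans
      (ncard_singleton s).le
  have hNs : Nsecond A v = ∅ := by
    unfold Sullivan1 dsecond at hv
    exact (ncard_eq_zero (toFinite _)).mp (by omega)
  -- without second out-neighbours, `insert v (Nplus A v)` is closed under out-arcs
  have hC : ∀ x ∈ insert v (Nplus A v), ∀ z, A x z → z ∈ insert v (Nplus A v) := by
    rintro x (rfl | hx) z hxz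
    · exact Or.inr hxz
    · have := mem_Nle2_of_arc_of_arc hx hxz
      rw [Nle2, hNs, union_empty] at this
      exact Or.inr this
  rcases hS.mem_of_forall_arc_mem hC (mem_insert v _) s with rfl | h
  exacts [hA.1 s hsv, hA.2 s v hsv h]

end IsOriented

namespace IsLocalTournament

variable (hA : IsLocalTournament A)
include hA

lemma arc_of_forall_ncard_Nle2_le {s v : V} (hin : ∃ y, A y v) (hv : ¬ Sullivan1 A v)
    (hmax : ∀ u ≠ s, (Nle2 A u).ncard ≤ (Nle2 A v).ncard) :
    A s v ∧ ∀ x ∈ Nminus A v, x ≠ s → A s x := by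
  have hking : ∀ y, IsKingOf A (Nminus A v) y → y = s := fun y hy => by
    by_contra hys
    exact (hA.1.ncard_Nle2_lt_of_not_sullivan1 hv hy).not_ge (hmax y hys)
  obtain ⟨y, hy⟩ := exists_isKingOf hA.1.1 hin (hA.pairwise_adjacent_Nminus v)
  exact ⟨hking y hy ▸ hy.1, fun x hx hxs =>
    arc_of_forall_isKingOf_eq hA.1.1 (hA.pairwise_adjacent_Nminus v) hking hx hxs⟩

theorem exists_ne_sullivan1 (hin : ∀ x, ∃ y, A y x) (hS : IsStrong A) (s : V) :
    ∃ v ≠ s, Sullivan1 A v := by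
  by_contra! hns
  let P := {v | v ≠ s ∧ ∀ u ≠ s, (Nle2 A u).ncard ≤ (Nle2 A v).ncard}
  have hP : P.Nonempty := by
    obtain ⟨t, ht⟩ := hin s
    obtain ⟨v, hv, hmax⟩ := exists_max_image {u | u ≠ s} (fun u => (Nle2 A u).ncard)
      (toFinite _) ⟨t, fun h => hA.1.1 s (h ▸ ht)⟩
    exact ⟨v, hv, hmax⟩
  have hdom : ∀ v ∈ P, A s v ∧ ∀ x ∈ Nminus A v, x ≠ s → A s x := fun v hv =>
    hA.arc_of_forall_ncard_Nle2_le (hin v) (hns v hv.1) hv.2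
  have hstep : ∀ v ∈ P, ∃ y ∈ P, Nle2 A y ⊆ Nclosed A v \ {s} := by
    intro v hv
    obtain ⟨y, hy⟩ := exists_isKingOf hA.1.1
      (hA.1.nonempty_Nminus_diff_of_isStrong hS (hdom v hv).1 (hns v hv.1))
      ((hA.pairwise_adjacent_Nminus v).mono sdiff_subset)
    have hys : y ≠ s := hy.1.2
    obtain ⟨heq, hsub⟩ :=
      hA.1.ncard_Nle2_eq_and_subset (hdom v hv).1 (hns v hv.1) hy (hv.2 y hys)
    exact ⟨y, ⟨hys, fun u hu => heq ▸ hv.2 u hu⟩, hsub⟩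
  obtain ⟨Q, hQP, hQ, hpred⟩ := hP.exists_subset_forall_exists_rel hstep
  exact hQ.ne_empty (hA.eq_empty_of_isStrong hS (fun w hw => hdom w (hQP hw)) hpred)

end IsLocalTournament

end Finite

end Digraph

/-- Every local tournament in which every vertex has in-degree at least one
has at least two distinct Sullivan-1 vertices. -/
theorem local_tournament_min_indegree_two_sullivan1 {V : Type*} [Fintype V] [Nonempty V]
    (A : V → V → Prop) (hA : IsLocalTournament A)
    (hin : ∀ x : V, ∃ y : V, A y x) :
    ∃ x y : V, x ≠ y ∧ Sullivan1 A x ∧ Sullivan1 A y := by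
  obtain ⟨S, ⟨a, ha⟩, hS, hstrong⟩ := exists_isStrong_inClosed A
  have hAS : IsLocalTournament (fun x y : S => A x y) := hA.comap Subtype.val_injective
  have hinS : ∀ x : S, ∃ y : S, A y x := fun x =>
    let ⟨y, hy⟩ := hin x
    ⟨⟨y, hS x x.2 y hy⟩, hy⟩
  have hlift : ∀ x : S, Sullivan1 (fun x y : S => A x y) x → Sullivan1 A x := fun x =>
    Sullivan1.of_comap Subtype.val_injective fun y hy => ⟨⟨y, hS x x.2 y hy⟩, rfl⟩
  obtain ⟨x, -, hx⟩ := hAS.exists_ne_sullivan1 hinS hstrong ⟨a, ha⟩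
  obtain ⟨y, hyx, hy⟩ := hAS.exists_ne_sullivan1 hinS hstrong x
  exact ⟨y, x, Subtype.val_injective.ne hyx, hlift y hy, hlift x hx⟩
end

section
/- Every strong tournament with at least three vertices has at least two distinct Sullivan-2 vertices. -/
/-!
A vertex `u` dominates `v` if `u → v` and `N⁺(v) ⊆ N⁺(u)`. In a tournament the
in-neighbourhood of `v` is the disjoint union of `N⁺⁺(v)` and the dominators of `v`, so `v` is
Sullivan-2 iff `d⁻(v) + #dominators(v) ≤ d⁺(v)`. Dominators have larger out-degree, so climbing
along dominators from a vertex with `d⁻ ≤ d⁺` ends at a Sullivan-2 vertex.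

Let `x` have an in-neighbour `w` and suppose no other vertex is Sullivan-2. Then `x` dominates
every other vertex `v` with `d⁻(v) ≤ d⁺(v)`, so `w` beats all of them. A vertex `y ≠ x` of
maximum out-degree `M` can only be dominated by `x`, which forces `n = 2M + 1`; counting
out-degrees then shows that more than `M` vertices other than `x` have out-degree `M`, and `w`
beats all of them and `x`, although `d⁺(w) < M`. Applied to two vertices, this gives two
Sullivan-2 vertices.
-/

open Finset

theorem Finset.sum_add_card_le_card_mul_add_card_filter {ι : Type*} (s : Finset ι) (f : ι → ℕ)
    {M : ℕ} (hf : ∀ i ∈ s, f i ≤ M) :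
    ∑ i ∈ s, f i + #s ≤ #s * M + #{i ∈ s | f i = M} := by
  calc ∑ i ∈ s, f i + #s = ∑ i ∈ s, (f i + 1) := by rw [sum_add_distrib, card_eq_sum_ones]
    _ ≤ ∑ i ∈ s, (M + if f i = M then 1 else 0) :=
        sum_le_sum fun i hi => by have := hf i hi; split_ifs <;> omega
    _ = #s * M + #{i ∈ s | f i = M} := by rw [sum_add_distrib, sum_const, smul_eq_mul, card_filter]

section Digraph

variable {V : Type*} {A : V → V → Prop}

def Dominates (A : V → V → Prop) (u v : V) : Prop :=
  A u v ∧ Nplus A v ⊆ Nplus A u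

def dominators (A : V → V → Prop) (v : V) : Set V :=
  {u | Dominates A u v}

theorem Dominates.trans {x u v : V} (hxu : Dominates A x u) (huv : Dominates A u v) :
    Dominates A x v :=
  ⟨hxu.2 huv.1, huv.2.trans hxu.2⟩

theorem Dominates.dplus_lt [Finite V] {u v : V} (huv : Dominates A u v) (hv : ¬ A v v) :
    dplus A v < dplus A u :=
  Set.ncard_lt_ncard ((Set.ssubset_iff_of_subset huv.2).2 ⟨v, huv.1, hv⟩)

theorem disjoint_nsecond_dominators (hA : IsOriented A) (v : V) :
    Disjoint (Nsecond A v) (dominators A v) := by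
  refine Set.disjoint_left.2 fun z hz hzv => ?_
  obtain ⟨u, hvu, huz⟩ := Set.mem_iUnion₂.1 hz.1
  exact hA.2 u z huz (hzv.2 hvu)

theorem sum_dplus_eq_sum_dminus [Fintype V] (A : V → V → Prop) :
    ∑ v, dplus A v = ∑ v, dminus A v := by
  classical
  simp only [dplus, dminus, Nplus, Nminus, Set.ncard_eq_toFinset_card', Set.toFinset_ofPred,
    card_filter]
  exact sum_comm

theorem card_le_dplus [Finite V] {w : V} {s : Finset V} (hs : ∀ u ∈ s, A w u) :
    #s ≤ dplus A w := by
  rw [← Set.ncard_coe_finset]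
  exact Set.ncard_le_ncard hs

theorem ncard_dominators_le_one_of_forall_dplus_le [Finite V] {x y : V} (hy : ¬ A y y)
    (hmax : ∀ u ≠ x, dplus A u ≤ dplus A y) : (dominators A y).ncard ≤ 1 := by
  refine (Set.ncard_le_ncard (t := {x}) fun u hu => ?_).trans (Set.ncard_singleton x).le
  by_contra hux
  have := hmax u hux
  have := hu.dplus_lt hy
  omega

end Digraph

namespace IsTournament

variable {V : Type*} {A : V → V → Prop}

theorem arc_of_dominates (hA : IsTournament A) {x v w : V} (hxv : Dominates A x v)
    (hwx : A w x) : A w v := by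
  have hwv : w ≠ v := by rintro rfl; exact hA.1.2 _ _ hwx hxv.1
  exact (hA.2 w v hwv).resolve_right fun hvw => hA.1.2 _ _ hwx (hxv.2 hvw)

theorem nminus_eq_nsecond_union_dominators (hA : IsTournament A) (v : V) :
    Nminus A v = Nsecond A v ∪ dominators A v := by
  ext z
  simp only [Nminus, Nsecond, dominators, Dominates, Nplus, Set.mem_ofPred_eq, Set.mem_union,
    Set.mem_sdiff, Set.mem_iUnion, exists_prop, Set.ofPred_subset_ofPred]
  constructor
  · intro hzv
    by_cases hdom : ∀ w, A v w → A z w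
    · exact Or.inr ⟨hzv, hdom⟩
    push Not at hdom
    obtain ⟨w, hvw, hzw⟩ := hdom
    have hwz : A w z := (hA.2 w z (by rintro rfl; exact hA.1.2 _ _ hzv hvw)).resolve_right hzw
    exact Or.inl ⟨⟨w, hvw, hwz⟩, hA.1.2 _ _ hzv⟩
  · rintro (⟨⟨u, hvu, huz⟩, hvz⟩ | ⟨hzv, -⟩)
    · exact (hA.2 z v (by rintro rfl; exact hA.1.2 _ _ hvu huz)).resolve_right hvz
    · exact hzv

theorem dminus_eq_dsecond_add_ncard_dominators (hA : IsTournament A) [Finite V] (v : V) :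
    dminus A v = dsecond A v + (dominators A v).ncard := by
  rw [dminus, hA.nminus_eq_nsecond_union_dominators, dsecond,
    Set.ncard_union_eq (disjoint_nsecond_dominators hA.1 v)]

theorem sullivan2_iff (hA : IsTournament A) [Finite V] (v : V) :
    Sullivan2 A v ↔ dminus A v + (dominators A v).ncard ≤ dplus A v := by
  have := hA.dminus_eq_dsecond_add_ncard_dominators v
  unfold Sullivan2
  omega

theorem dplus_add_dminus_add_one (hA : IsTournament A) [Fintype V] (v : V) :
    dplus A v + dminus A v + 1 = Fintype.card V := by
  have hcompl : (Nplus A v ∪ Nminus A v)ᶜ = {v} := by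
    ext w
    simp only [Nplus, Nminus, Set.mem_compl_iff, Set.mem_union, Set.mem_ofPred_eq,
      Set.mem_singleton_iff, not_or]
    constructor
    · intro ⟨hvw, hwv⟩
      by_contra hne
      exact (hA.2 v w (Ne.symm hne)).elim hvw hwv
    · rintro rfl
      exact ⟨hA.1.1 w, hA.1.1 w⟩
  have hdisj : Disjoint (Nplus A v) (Nminus A v) :=
    Set.disjoint_left.2 fun w hvw hwv => hA.1.2 _ _ hvw hwv
  have := Set.ncard_add_ncard_compl (Nplus A v ∪ Nminus A v)
  rwa [hcompl, Set.ncard_singleton, Set.ncard_union_eq hdisj, Nat.card_eq_fintype_card] at this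

theorem two_mul_sum_dplus_add_card (hA : IsTournament A) [Fintype V] :
    2 * ∑ v, dplus A v + Fintype.card V = Fintype.card V * Fintype.card V := by
  have h := sum_congr rfl fun v (_ : v ∈ univ) => hA.dplus_add_dminus_add_one v
  rw [sum_add_distrib, sum_add_distrib, ← sum_dplus_eq_sum_dminus] at h
  simp only [sum_const, card_univ, smul_eq_mul, mul_one] at h
  omega

theorem dminus_lt_of_dominates (hA : IsTournament A) [Fintype V] {u v : V}
    (huv : Dominates A u v) : dminus A u < dminus A v := by
  have := huv.dplus_lt (hA.1.1 v)
  have := hA.dplus_add_dminus_add_one u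
  have := hA.dplus_add_dminus_add_one v
  omega

theorem exists_sullivan2_dominates (hA : IsTournament A) [Fintype V] {v : V}
    (hv : dminus A v ≤ dplus A v) : ∃ z, Sullivan2 A z ∧ (z = v ∨ Dominates A z v) := by
  classical
  obtain ⟨z, hz, hmax⟩ :=
    exists_max_image {u | u = v ∨ Dominates A u v} (dplus A) ⟨v, by simp⟩
  rw [mem_filter_univ] at hz
  refine ⟨z, ?_, hz⟩
  have hz_le : dminus A z ≤ dplus A z := by
    rcases hz with rfl | hzv
    · exact hv
    · have := hzv.dplus_lt (hA.1.1 v)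
      have := hA.dminus_lt_of_dominates hzv
      omega
  by_contra hns
  rw [hA.sullivan2_iff] at hns
  obtain ⟨u, huz⟩ : (dominators A z).Nonempty := Set.nonempty_of_ncard_ne_zero (by omega)
  have huv : Dominates A u v := hz.elim (fun h => h ▸ huz) huz.trans
  have := hmax u (by simp [huv])
  have := huz.dplus_lt (hA.1.1 z)
  omega

theorem exists_ne_dminus_le_dplus (hA : IsTournament A) [Fintype V] {x : V}
    (hx : 0 < dminus A x) : ∃ v ≠ x, dminus A v ≤ dplus A v := by
  classical
  by_contra! h
  have hsum : ∑ v ∈ univ.erase x, (dplus A v + 1) ≤ ∑ v ∈ univ.erase x, dminus A v :=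
    sum_le_sum fun v hv => h v (ne_of_mem_erase hv)
  rw [sum_add_distrib, sum_const, card_erase_of_mem (mem_univ x), card_univ, smul_eq_mul,
    mul_one] at hsum
  have htotal := sum_dplus_eq_sum_dminus A
  rw [← add_sum_erase _ _ (mem_univ x), ← add_sum_erase _ _ (mem_univ x)] at htotal
  have := hA.dplus_add_dminus_add_one x
  omega

theorem lt_card_filter_dplus_eq (hA : IsTournament A) [Fintype V] [DecidableEq V] {x : V}
    (hx : 0 < dminus A x) {M : ℕ} (hcard : Fintype.card V = 2 * M + 1)
    (hle : ∀ v ≠ x, dplus A v ≤ M) :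
    M < #{v ∈ univ.erase x | dplus A v = M} := by
  have hsum := (univ.erase x).sum_add_card_le_card_mul_add_card_filter (dplus A)
    fun v hv => hle v (ne_of_mem_erase hv)
  rw [card_erase_of_mem (mem_univ x), card_univ] at hsum
  have htotal := hA.two_mul_sum_dplus_add_card
  rw [← add_sum_erase _ _ (mem_univ x)] at htotal
  have := hA.dplus_add_dminus_add_one x
  rw [hcard, Nat.add_sub_cancel] at hsum
  rw [hcard] at htotal this
  nlinarith

theorem dominates_of_forall_ne_not_sullivan2 (hA : IsTournament A) [Fintype V] {x v : V}
    (hns : ∀ y ≠ x, ¬ Sullivan2 A y) (hvx : v ≠ x) (hv : dminus A v ≤ dplus A v) :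
    Dominates A x v := by
  obtain ⟨z, hz, rfl | hzv⟩ := hA.exists_sullivan2_dominates hv
  · exact absurd hz (hns z hvx)
  · obtain rfl : z = x := by_contra fun h => hns z h hz
    exact hzv

theorem exists_ne_sullivan2 (hA : IsTournament A) [Fintype V] {w x : V} (hwx : A w x) :
    ∃ y ≠ x, Sullivan2 A y := by
  classical
  by_contra! hns
  have hx : 0 < dminus A x := (Set.ncard_pos (Set.toFinite _)).2 ⟨w, hwx⟩
  obtain ⟨v, hvx, hv⟩ := hA.exists_ne_dminus_le_dplus hx
  obtain ⟨y, hy, hmax⟩ :=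
    exists_max_image (univ.erase x) (dplus A) ⟨v, mem_erase.2 ⟨hvx, mem_univ v⟩⟩
  have hyx := ne_of_mem_erase hy
  replace hmax : ∀ u ≠ x, dplus A u ≤ dplus A y :=
    fun u hu => hmax u (mem_erase.2 ⟨hu, mem_univ u⟩)
  have hdom_y := ncard_dominators_le_one_of_forall_dplus_le (hA.1.1 y) hmax
  have hy := (hA.sullivan2_iff y).not.1 (hns y hyx)
  have hcard : Fintype.card V = 2 * dplus A y + 1 := by
    have := hmax v hvx
    have := hA.dplus_add_dminus_add_one v
    have := hA.dplus_add_dminus_add_one y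
    omega
  set H := {u ∈ univ.erase x | dplus A u = dplus A y}
  have hxH : ∀ u ∈ H, Dominates A x u := by
    intro u hu
    rw [mem_filter, mem_erase] at hu
    have := hA.dplus_add_dminus_add_one u
    exact hA.dominates_of_forall_ne_not_sullivan2 hns hu.1.1 (by omega)
  have hwH : w ∉ H := fun hw => hA.1.2 _ _ hwx (hxH w hw).1
  have hwy : dplus A w < dplus A y := by
    have hwx' : w ≠ x := by rintro rfl; exact hA.1.1 w hwx
    have := hmax w hwx'
    have : dplus A w ≠ dplus A y := fun h => hwH (by simp [H, hwx', h])
    omega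
  have hHw : #H + 1 ≤ dplus A w := by
    refine (card_insert_of_notMem fun hxH => ?_).symm.trans_le
      (card_le_dplus (s := insert x H) ?_)
    · simp [H] at hxH
    · simp only [mem_insert, forall_eq_or_imp]
      exact ⟨hwx, fun u hu => hA.arc_of_dominates (hxH u hu) hwx⟩
  have : dplus A y < #H := hA.lt_card_filter_dplus_eq hx hcard hmax
  omega

end IsTournament

theorem IsStrong.exists_arc_to {V : Type*} {A : V → V → Prop} (hA : IsStrong A) {x y : V}
    (hxy : x ≠ y) : ∃ u, A u y := by
  rcases (hA x y).cases_tail with rfl | ⟨u, -, huy⟩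
  · exact absurd rfl hxy
  · exact ⟨u, huy⟩

/-- Every strong tournament with at least three vertices has at least two distinct
Sullivan-2 vertices. -/
theorem strong_tournament_two_sullivan2 {V : Type*} [Fintype V]
    (A : V → V → Prop) (hA : IsTournament A) (hstrong : IsStrong A)
    (hcard : 3 ≤ Fintype.card V) :
    ∃ x y : V, x ≠ y ∧ Sullivan2 A x ∧ Sullivan2 A y := by
  have hin : ∀ v : V, ∃ u, A u v := fun v => by
    obtain ⟨x, hxv⟩ := Fintype.exists_ne_of_one_lt_card (by omega) v
    exact hstrong.exists_arc_to hxv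
  have : Nonempty V := Fintype.card_pos_iff.1 (by omega)
  obtain ⟨w, hw⟩ := hin (Classical.arbitrary V)
  obtain ⟨y, -, hy⟩ := hA.exists_ne_sullivan2 hw
  obtain ⟨u, hu⟩ := hin y
  obtain ⟨z, hzy, hz⟩ := hA.exists_ne_sullivan2 hu
  exact ⟨z, y, hzy, hz, hy⟩
end

section
/- Let D be a connected but not strong local tournament in which every vertex has in-degree at least one. Then D has at least three distinct Sullivan-1 vertices. -/
/-!
Let `S` be an initial strong component of `D`: a strongly connected set closed under taking
in-neighbours. Since `D` is connected but not strong, some arc leaves `S`, say `u → v`, and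
following a path inside `S` from `u` the local tournament property shows that every vertex of `S`
dominates `v`. As in-neighbours of `v` are pairwise adjacent, `S` induces a tournament.

A king of `S` (a vertex reaching every other vertex of `S` in at most two steps) is Sullivan-1:
its in-neighbours lie in `S` and are not out-neighbours, so they are second out-neighbours.
Every vertex `k` of `S` has an in-neighbour, hence a king of `N⁻(k)` exists, and it is a king of
`S` dominating `k`. Starting from any vertex and iterating this three times yields three distinct
kings `k₃ → k₂ → k₁`.
-/

section

variable {V : Type*} {A : V → V → Prop}

def IsInClosed (A : V → V → Prop) (S : Set V) : Prop :=
  ∀ ⦃x y⦄, A x y → y ∈ S → x ∈ S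

def IsKing (A : V → V → Prop) (T : Set V) (k : V) : Prop :=
  k ∈ T ∧ ∀ y ∈ T, y ≠ k → A k y ∨ ∃ z ∈ T, A k z ∧ A z y

theorem IsKing.sullivan1 [Finite V] (hA : IsOriented A) {S : Set V} (hS : IsInClosed A S)
    {k : V} (hk : IsKing A S k) : Sullivan1 A k := by
  refine Set.ncard_le_ncard (fun y (hyk : A y k) => ?_) (Set.toFinite _)
  rcases hk.2 y (hS hyk hk.1) (fun h => hA.1 k (h ▸ hyk)) with hky | ⟨z, -, hkz, hzy⟩
  · exact absurd hky (hA.2 y k hyk)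
  · exact ⟨Set.mem_biUnion hkz hzy, hA.2 y k hyk⟩

/-- A vertex of maximum out-degree in a tournament is a king. -/
theorem exists_isKing (hirr : ∀ x, ¬ A x x) {T : Set V} (hfin : T.Finite)
    (htour : T.Pairwise (Adjacent A)) (hne : T.Nonempty) : ∃ k, IsKing A T k := by
  obtain ⟨k, hkT, hmax⟩ :=
    Set.exists_max_image T (fun x => {z ∈ T | A x z}.ncard) hfin hne
  refine ⟨k, hkT, fun y hyT hyk => ?_⟩
  by_contra! hfar
  obtain ⟨hky, hfar⟩ := hfar
  have hyk' : A y k := (htour hkT hyT (Ne.symm hyk)).resolve_left hky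
  have hsub : insert k {z ∈ T | A k z} ⊆ {z ∈ T | A y z} := by
    rintro z (rfl | ⟨hzT, hkz⟩)
    · exact ⟨hkT, hyk'⟩
    · have hzy : z ≠ y := by rintro rfl; exact hky hkz
      exact ⟨hzT, (htour hyT hzT (Ne.symm hzy)).resolve_right (hfar z hzT hkz)⟩
  have hcard := Set.ncard_le_ncard hsub (hfin.subset fun z hz => hz.1)
  rw [Set.ncard_insert_of_notMem (fun h => hirr k h.2) (hfin.subset fun z hz => hz.1)] at hcard
  linarith [hmax y hyT]

theorem exists_isKing_arc (hirr : ∀ x, ¬ A x x) {T : Set V} (hfin : T.Finite)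
    (htour : T.Pairwise (Adjacent A)) {k : V} (hk : k ∈ T) (hin : ∃ w ∈ T, A w k) :
    ∃ k', A k' k ∧ IsKing A T k' := by
  obtain ⟨w, hwT, hwk⟩ := hin
  obtain ⟨k', ⟨hk'T, hk'k⟩, hking⟩ :=
    exists_isKing (T := {y ∈ T | A y k}) hirr (hfin.subset fun y hy => hy.1)
      (htour.mono fun y hy => hy.1) ⟨w, hwT, hwk⟩
  refine ⟨k', hk'k, hk'T, fun y hyT hyk' => ?_⟩
  by_cases hyk : A y k
  · rcases hking y ⟨hyT, hyk⟩ hyk' with h | ⟨z, hz, h⟩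
    exacts [Or.inl h, Or.inr ⟨z, hz.1, h⟩]
  · rcases eq_or_ne y k with rfl | hne
    · exact Or.inl hk'k
    · exact Or.inr ⟨k, hk, hk'k, (htour hyT hk hne).resolve_left hyk⟩

theorem exists_three_isKing (hA : IsOriented A) {T : Set V} (hfin : T.Finite)
    (htour : T.Pairwise (Adjacent A)) (hne : T.Nonempty) (hin : ∀ k ∈ T, ∃ w ∈ T, A w k) :
    ∃ x y z, x ≠ y ∧ x ≠ z ∧ y ≠ z ∧ IsKing A T x ∧ IsKing A T y ∧ IsKing A T z := by
  have step {k} (hk : k ∈ T) := exists_isKing_arc hA.1 hfin htour hk (hin k hk)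
  obtain ⟨x0, hx0⟩ := hne
  obtain ⟨k₁, -, hk₁⟩ := step hx0
  obtain ⟨k₂, h₂₁, hk₂⟩ := step hk₁.1
  obtain ⟨k₃, h₃₂, hk₃⟩ := step hk₂.1
  refine ⟨k₁, k₂, k₃, ?_, ?_, ?_, hk₁, hk₂, hk₃⟩
  · rintro rfl; exact hA.1 _ h₂₁
  · rintro rfl; exact hA.2 _ _ h₃₂ h₂₁
  · rintro rfl; exact hA.1 _ h₃₂

/-- The ancestors of a vertex with the fewest ancestors form an initial strong component. -/
theorem exists_isInClosed_strongly_connected [Finite V] [Nonempty V] (A : V → V → Prop) :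
    ∃ S : Set V, S.Nonempty ∧ IsInClosed A S ∧
      ∀ a ∈ S, ∀ b ∈ S, Relation.ReflTransGen A a b := by
  obtain ⟨x, hx⟩ := Finite.exists_min fun x : V => {y | Relation.ReflTransGen A y x}.ncard
  have hreach : ∀ y, Relation.ReflTransGen A y x → Relation.ReflTransGen A x y := by
    intro y hyx
    by_contra hxy
    have hlt : {z | Relation.ReflTransGen A z y}.ncard < {z | Relation.ReflTransGen A z x}.ncard :=
      Set.ncard_lt_ncard ⟨fun z hz => hz.trans hyx, fun h => hxy (h .refl)⟩ (Set.toFinite _)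
    exact (hx y).not_gt hlt
  exact ⟨{y | Relation.ReflTransGen A y x}, ⟨x, .refl⟩, fun y z hyz hz => .head hyz hz,
    fun a ha b hb => ha.trans (hreach b hb)⟩

theorem exists_arc_of_isInClosed (hconn : (SimpleGraph.fromRel A).Connected) {S : Set V}
    (hS : IsInClosed A S) {u v : V} (hu : u ∈ S) (hv : v ∉ S) : ∃ a ∈ S, ∃ b ∉ S, A a b := by
  obtain ⟨d, -, hd₁, hd₂⟩ := (hconn.preconnected u v).some.exists_boundary_dart S hu hv
  rcases (SimpleGraph.fromRel_adj _ _ _).mp d.adj with ⟨-, h | h⟩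
  · exact ⟨_, hd₁, _, hd₂, h⟩
  · exact absurd (hS h hd₁) hd₂

theorem arc_of_reflTransGen (hA : IsLocalTournament A) {S : Set V} (hS : IsInClosed A S)
    {u v w : V} (hv : v ∉ S) (huv : A u v) (huw : Relation.ReflTransGen A u w) (hw : w ∈ S) :
    A w v := by
  induction huw with
  | refl => exact huv
  | @tail b c _ hbc ih =>
    have hcv : v ≠ c := by rintro rfl; exact hv hw
    exact (hA.2.1 b v c (ih (hS hbc hw)) hbc hcv).resolve_left fun hvc => hv (hS hvc hw)

end

/-- A connected but not strong local tournament in which every vertex has in-degree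
at least one has at least three distinct Sullivan-1 vertices. -/
theorem connected_nonstrong_local_tournament_three_sullivan1 {V : Type*} [Fintype V]
    (A : V → V → Prop) (hA : IsLocalTournament A)
    (hconn : (SimpleGraph.fromRel A).Connected)
    (hns : ¬ IsStrong A)
    (hin : ∀ x : V, ∃ y : V, A y x) :
    ∃ x y z : V, x ≠ y ∧ x ≠ z ∧ y ≠ z ∧
      Sullivan1 A x ∧ Sullivan1 A y ∧ Sullivan1 A z := by
  have : Nonempty V := hconn.nonempty
  obtain ⟨S, ⟨x0, hx0⟩, hS, hstrong⟩ := exists_isInClosed_strongly_connected A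
  obtain ⟨v0, hv0⟩ : ∃ v, v ∉ S := by
    by_contra! h
    exact hns fun a b => hstrong a (h a) b (h b)
  obtain ⟨u, hu, v, hv, huv⟩ := exists_arc_of_isInClosed hconn hS hx0 hv0
  have hdom : ∀ w ∈ S, A w v := fun w hw =>
    arc_of_reflTransGen hA hS hv huv (hstrong u hu w hw) hw
  have htour : S.Pairwise (Adjacent A) := fun a ha b hb hab =>
    hA.2.2 v a b (hdom a ha) (hdom b hb) hab
  have hinS : ∀ k ∈ S, ∃ w ∈ S, A w k := fun k hk =>
    let ⟨w, hwk⟩ := hin k; ⟨w, hS hwk hk, hwk⟩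
  obtain ⟨x, y, z, hxy, hxz, hyz, hx, hy, hz⟩ :=
    exists_three_isKing hA.1 S.toFinite htour ⟨x0, hx0⟩ hinS
  exact ⟨x, y, z, hxy, hxz, hyz, hx.sullivan1 hA.1 hS, hy.sullivan1 hA.1 hS,
    hz.sullivan1 hA.1 hS⟩
end

section
/- Let D be a connected but not strong local tournament in which every vertex has in-degree at least one. Then D has at least two distinct Sullivan-2 vertices. -/
/-!
Let `T` be the set of ancestors of a vertex `x₀` whose ancestor set is smallest: it is an initial
strong component, so no arc enters it, and it is not everything since `D` is not strong. By
connectivity some arc `s → c` leaves `T`, and the local tournament property pushes it along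
paths in `T`, so every vertex of `T` dominates `c`. The in-neighbours of `c` form a tournament,
so `T` is a tournament containing all in-neighbours of its vertices, and each vertex of `T` gains
`c` as an extra out-neighbour. In a tournament an in-neighbour of `x` outside `N⁺⁺(x)` beats `x`
and all of `N⁺(x)`, so has larger score. Hence the vertex `x₁` of largest score and the vertex
`x₂` of largest score besides `x₁` miss at most one in-neighbour in their second
out-neighbourhood, and counting scores, using that no vertex of `T` is a source, shows that both
have at least as many out- as in-neighbours in `T`, which makes them Sullivan-2 vertices.
-/

open Finset Relation

section Digraph

variable {V : Type*} {A : V → V → Prop}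

def InClosed (A : V → V → Prop) (T : Set V) : Prop :=
  ∀ x ∈ T, ∀ y, A y x → y ∈ T

open Classical in
noncomputable def outdegOn (A : V → V → Prop) (T : Finset V) (x : V) : ℕ := #{y ∈ T | A x y}

open Classical in
noncomputable def indegOn (A : V → V → Prop) (T : Finset V) (x : V) : ℕ := #{y ∈ T | A y x}

theorem exists_nonempty_inClosed_strong_finset [Fintype V] [Nonempty V]
    (A : V → V → Prop) :
    ∃ T : Finset V, T.Nonempty ∧ InClosed A T ∧ ∀ x ∈ T, ∀ y ∈ T, ReflTransGen A x y := by
  classical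
  let anc (x : V) : Finset V := {y | ReflTransGen A y x}
  have mem_anc {x y : V} : y ∈ anc x ↔ ReflTransGen A y x := by simp [anc]
  obtain ⟨x₀, hx₀⟩ := Finite.exists_min fun x => #(anc x)
  have hback : ∀ y ∈ anc x₀, ReflTransGen A x₀ y := by
    intro y hy
    have hsub : anc y ⊆ anc x₀ := fun z hz => mem_anc.2 ((mem_anc.1 hz).trans (mem_anc.1 hy))
    rw [← mem_anc, eq_of_subset_of_card_le hsub (hx₀ y)]
    exact mem_anc.2 .refl
  refine ⟨anc x₀, ⟨x₀, mem_anc.2 .refl⟩, fun x hx y hyx => ?_, fun x hx y hy => ?_⟩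
  · exact mem_anc.2 (.head hyx (mem_anc.1 hx))
  · exact (mem_anc.1 hx).trans (hback y hy)

theorem exists_arc_of_inClosed (hconn : (SimpleGraph.fromRel A).Preconnected) {T : Set V}
    (hT : InClosed A T) {a b : V} (ha : a ∈ T) (hb : b ∉ T) :
    ∃ s ∈ T, ∃ c ∉ T, A s c := by
  obtain ⟨w⟩ := hconn a b
  obtain ⟨d, -, hd₁, hd₂⟩ := w.exists_boundary_dart T ha hb
  rcases (SimpleGraph.fromRel_adj _ _ _).1 d.adj |>.2 with h | h
  · exact ⟨_, hd₁, _, hd₂, h⟩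
  · exact absurd (hT _ hd₁ _ h) hd₂

theorem IsLocalTournament.arc_of_reflTransGen (hA : IsLocalTournament A) {T : Set V}
    (hT : InClosed A T) {s c t : V} (hc : c ∉ T) (hsc : A s c) (hst : ReflTransGen A s t)
    (ht : t ∈ T) : A t c := by
  induction hst with
  | refl => exact hsc
  | @tail u w _ huw ih =>
    have huc := ih (hT w ht u huw)
    rcases hA.2.1 u w c huw huc (by rintro rfl; exact hc ht) with h | h
    · exact h
    · exact absurd (hT w ht c h) hc

section Tournament

variable {T : Finset V} {x u : V} (hA : IsOriented A)
  (hT : ∀ x ∈ T, ∀ y ∈ T, x ≠ y → Adjacent A x y)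
include hA hT

theorem outdegOn_add_indegOn (hx : x ∈ T) : outdegOn A T x + indegOn A T x + 1 = #T := by
  classical
  have hunion : {y ∈ T | A x y} ∪ {y ∈ T | A y x} = T.erase x := by
    ext y
    simp only [mem_union, mem_filter, mem_erase]
    constructor
    · rintro (⟨hy, h⟩ | ⟨hy, h⟩) <;> exact ⟨by rintro rfl; exact hA.1 _ h, hy⟩
    · rintro ⟨hne, hy⟩
      rcases hT x hx y hy (Ne.symm hne) with h | h
      exacts [.inl ⟨hy, h⟩, .inr ⟨hy, h⟩]
  have hdisj : Disjoint {y ∈ T | A x y} {y ∈ T | A y x} :=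
    disjoint_filter.2 fun y _ hxy hyx => hA.2 x y hxy hyx
  rw [outdegOn, indegOn, ← card_union_of_disjoint hdisj, hunion, card_erase_add_one hx]

theorem two_mul_sum_outdegOn_add_card :
    2 * ∑ x ∈ T, outdegOn A T x + #T = #T * #T := by
  classical
  have hswap : ∑ x ∈ T, indegOn A T x = ∑ x ∈ T, outdegOn A T x := by
    simp only [outdegOn, indegOn, card_filter]
    exact sum_comm
  have hsum := sum_congr rfl fun x hx => outdegOn_add_indegOn hA hT (x := x) hx
  rw [sum_add_distrib, sum_add_distrib, hswap, sum_const, sum_const, smul_eq_mul,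
    smul_eq_mul] at hsum
  linarith

theorem outdegOn_lt_of_notMem_Nsecond (hx : x ∈ T) (hu : u ∈ T) (hux : A u x)
    (hu₂ : u ∉ Nsecond A x) : outdegOn A T x < outdegOn A T u := by
  classical
  have hsub : insert x {y ∈ T | A x y} ⊆ {y ∈ T | A u y} := by
    intro y hy
    rcases mem_insert.1 hy with rfl | hy
    · exact mem_filter.2 ⟨hx, hux⟩
    · obtain ⟨hyT, hxy⟩ := mem_filter.1 hy
      have hne : u ≠ y := by rintro rfl; exact hA.2 _ _ hux hxy
      have hyu : ¬ A y u := fun hyu =>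
        hu₂ ⟨Set.mem_biUnion (show y ∈ Nplus A x from hxy) hyu, hA.2 u x hux⟩
      exact mem_filter.2 ⟨hyT, (hT u hu y hyT hne).resolve_right hyu⟩
  have hx' : x ∉ {y ∈ T | A x y} := fun h => hA.1 x (mem_filter.1 h).2
  have := card_le_card hsub
  rwa [card_insert_of_notMem hx'] at this

/-- If no vertex is a source, `x₁` has score at most `#T - 2`, and then the scores summing to
`#T (#T - 1) / 2` force the largest score `s` among the other vertices to satisfy
`2 s ≥ #T - 1`. -/
theorem indegOn_le_outdegOn_of_forall_le [DecidableEq V] (hin : ∀ x ∈ T, 0 < indegOn A T x)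
    {x₁ x₂ : V} (hx₁ : x₁ ∈ T) (hx₂ : x₂ ∈ T.erase x₁)
    (hmax : ∀ y ∈ T.erase x₁, outdegOn A T y ≤ outdegOn A T x₂) :
    indegOn A T x₂ ≤ outdegOn A T x₂ := by
  have hsum := two_mul_sum_outdegOn_add_card hA hT
  have hdeg₁ := outdegOn_add_indegOn hA hT hx₁
  have hdeg₂ := outdegOn_add_indegOn hA hT (mem_of_mem_erase hx₂)
  have hin₁ := hin x₁ hx₁
  have hsplit := add_sum_erase T (outdegOn A T) hx₁
  have hrest := sum_le_card_nsmul _ _ _ hmax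
  rw [card_erase_of_mem hx₁, smul_eq_mul] at hrest
  obtain ⟨m, hm⟩ : ∃ m, #T = m + 1 := ⟨#T - 1, by omega⟩
  rw [hm] at hsum hdeg₁ hdeg₂ hrest
  simp only [add_tsub_cancel_right] at hrest
  by_contra! hlt
  nlinarith

end Tournament

section DominatedTournament

variable {T : Finset V} {c x z : V} (hA : IsOriented A)
  (hclosed : InClosed A T) (hc : ∀ x ∈ T, A x c)

include hclosed in
theorem dminus_eq_indegOn (hx : x ∈ T) : dminus A x = indegOn A T x := by
  classical
  have : Nminus A x = ↑({y ∈ T | A y x} : Finset V) := by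
    ext y
    simp only [Nminus, coe_filter]
    exact ⟨fun h => ⟨hclosed x hx y h, h⟩, fun h => h.2⟩
  rw [dminus, this, Set.ncard_coe_finset, indegOn]

include hA hc in
theorem outdegOn_lt_dplus [Finite V] (hx : x ∈ T) : outdegOn A T x < dplus A x := by
  classical
  have hsub : ↑(insert c {y ∈ T | A x y}) ⊆ Nplus A x := by
    intro y hy
    simp only [coe_insert, Set.mem_insert_iff, coe_filter] at hy
    rcases hy with rfl | hy
    exacts [hc x hx, hy.2]
  have hcT : c ∉ {y ∈ T | A x y} := fun h => hA.1 c (hc c (mem_filter.1 h).1)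
  have := Set.ncard_le_ncard hsub (Set.toFinite _)
  rwa [Set.ncard_coe_finset, card_insert_of_notMem hcT] at this

variable (hT : ∀ x ∈ T, ∀ y ∈ T, x ≠ y → Adjacent A x y)
include hA hT hclosed hc

theorem sullivan2_of_indegOn_le_outdegOn [Finite V] (hx : x ∈ T)
    (hgf : indegOn A T x ≤ outdegOn A T x)
    (hz : ∀ u ∈ T, outdegOn A T x < outdegOn A T u → u = z) : Sullivan2 A x := by
  have hsub : Nminus A x ⊆ insert z (Nsecond A x) := by
    intro u hux
    by_cases hu : u ∈ Nsecond A x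
    · exact .inr hu
    · have huT := hclosed x hx u hux
      exact .inl (hz u huT (outdegOn_lt_of_notMem_Nsecond hA hT hx huT hux hu))
  have hsecond : dminus A x ≤ dsecond A x + 1 :=
    (Set.ncard_le_ncard hsub (Set.toFinite _)).trans (Set.ncard_insert_le _ _)
  have hminus := dminus_eq_indegOn hclosed hx
  have hplus := outdegOn_lt_dplus hA hc hx
  unfold Sullivan2
  omega

theorem exists_two_sullivan2 [Finite V] (hT₀ : T.Nonempty) (hin : ∀ x ∈ T, ∃ y, A y x) :
    ∃ x y, x ≠ y ∧ Sullivan2 A x ∧ Sullivan2 A y := by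
  classical
  have hin' : ∀ x ∈ T, 0 < indegOn A T x := fun x hx =>
    let ⟨y, hyx⟩ := hin x hx
    card_pos.2 ⟨y, mem_filter.2 ⟨hclosed x hx y hyx, hyx⟩⟩
  obtain ⟨x₁, hx₁, hmax₁⟩ := exists_max_image T (outdegOn A T) hT₀
  have hdeg₁ := outdegOn_add_indegOn hA hT hx₁
  have hrest : (T.erase x₁).Nonempty := by
    rw [← card_pos, card_erase_of_mem hx₁]
    have := hin' x₁ hx₁
    omega
  obtain ⟨x₂, hx₂, hmax₂⟩ := exists_max_image (T.erase x₁) (outdegOn A T) hrest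
  have hx₂T := mem_of_mem_erase hx₂
  have hgf₂ := indegOn_le_outdegOn_of_forall_le hA hT hin' hx₁ hx₂ hmax₂
  have hgf₁ : indegOn A T x₁ ≤ outdegOn A T x₁ := by
    have := outdegOn_add_indegOn hA hT hx₂T
    have := hmax₁ x₂ hx₂T
    omega
  refine ⟨x₁, x₂, (ne_of_mem_erase hx₂).symm, ?_, ?_⟩
  · exact sullivan2_of_indegOn_le_outdegOn hA hclosed hc hT hx₁ hgf₁ (z := x₁)
      fun u hu hlt => absurd (hmax₁ u hu) (not_le.2 hlt)
  · refine sullivan2_of_indegOn_le_outdegOn hA hclosed hc hT hx₂T hgf₂ (z := x₁)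
      fun u hu hlt => ?_
    by_contra hne
    exact absurd (hmax₂ u (mem_erase.2 ⟨hne, hu⟩)) (not_le.2 hlt)

end DominatedTournament

end Digraph

/-- A connected but not strong local tournament in which every vertex has in-degree
at least one has at least two distinct Sullivan-2 vertices. -/
theorem connected_nonstrong_local_tournament_two_sullivan2 {V : Type*} [Fintype V]
    (A : V → V → Prop) (hA : IsLocalTournament A)
    (hconn : (SimpleGraph.fromRel A).Connected)
    (hns : ¬ IsStrong A)
    (hin : ∀ x : V, ∃ y : V, A y x) :
    ∃ x y : V, x ≠ y ∧ Sullivan2 A x ∧ Sullivan2 A y := by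
  have : Nonempty V := hconn.nonempty
  obtain ⟨T, ⟨x₀, hx₀⟩, hclosed, hstrong⟩ := exists_nonempty_inClosed_strong_finset A
  obtain ⟨b, hb⟩ : ∃ b, b ∉ T := by
    by_contra! hall
    exact hns fun x y => hstrong x (hall x) y (hall y)
  obtain ⟨s, hs, c, hc, hsc⟩ := exists_arc_of_inClosed hconn.preconnected hclosed hx₀ hb
  have hdom : ∀ t ∈ T, A t c := fun t ht =>
    hA.arc_of_reflTransGen hclosed hc hsc (hstrong s hs t ht) ht
  have htour : ∀ x ∈ T, ∀ y ∈ T, x ≠ y → Adjacent A x y := fun x hx y hy hne =>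
    hA.2.2 c x y (hdom x hx) (hdom y hy) hne
  exact exists_two_sullivan2 hA.1 hclosed hdom htour ⟨x₀, hx₀⟩ fun x _ => hin x
end

section
/- Every round decomposable local tournament has a Sullivan-1 vertex. -/
/-!
Let `D = R[S₁, …, S_r]`. In the part `S_i`, a vertex `x` of maximum out-degree within `S_i` is a
king of the tournament `S_i`, so its in-neighbours inside `S_i` are second out-neighbours of `x`.
Outside `S_i`, the in-neighbours and the second out-neighbours of `x` are the unions of the parts
over `N⁻_R(i)` and `N⁺⁺_R(i)`. Hence `x` is a Sullivan-1 vertex as soon as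
`w(N⁻_R(i)) ≤ w(N⁺⁺_R(i))`, where `w` counts the vertices of the parts.

Such an `i` exists for every monotone weight `w` once each vertex `i` of `R` has a `j` with
`N⁻(j) ⊆ N⁺⁺(i)` or `N⁻(j) ⊆ N⁺⁺(j)`: take `i` minimising `w(N⁻(i))`. A vertex without in-neighbours
is its own `j`; otherwise every arc `i - 1 → i` is present. In a round local tournament (labelled by
`ZMod r`, with out-neighbourhoods forward intervals) let `m` be the largest offset from `i` of a
vertex reached by a path of length two. If `m = r - 1`, all of `N⁻(i)` lies in `N⁺⁺(i)`. Otherwise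
put `j = i + m + 1`: the in-neighbours of `j` at offset at most `m` from `i` lie in `N⁺⁺(i)`, and an
in-neighbour further away forces `j` to reach offset `r - 1`, so `N⁻(j) ⊆ N⁺⁺(j)`.
-/

section Digraph

variable {V W : Type*}

@[simp]
lemma mem_Nsecond {A : V → V → Prop} {x z : V} :
    z ∈ Nsecond A x ↔ (∃ u, A x u ∧ A u z) ∧ ¬ A x z := by
  simp [Nsecond, Nplus]

lemma IsLocalTournament.comap_s7 {B : W → W → Prop} (hB : IsLocalTournament B) {f : V → W}
    (hf : Function.Injective f) : IsLocalTournament fun x y => B (f x) (f y) :=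
  ⟨⟨fun x => hB.1.1 (f x), fun x y => hB.1.2 (f x) (f y)⟩,
    fun _ _ _ hy hz hyz => hB.2.1 _ _ _ hy hz (hf.ne hyz),
    fun _ _ _ hy hz hyz => hB.2.2 _ _ _ hy hz (hf.ne hyz)⟩

lemma Nminus_comap (B : W → W → Prop) (f : V → W) (x : V) :
    Nminus (fun x y => B (f x) (f y)) x = f ⁻¹' Nminus B (f x) :=
  rfl

lemma Nsecond_comap_equiv (B : W → W → Prop) (e : V ≃ W) (x : V) :
    Nsecond (fun x y => B (e x) (e y)) x = e ⁻¹' Nsecond B (e x) := by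
  ext z
  simp only [mem_Nsecond, Set.mem_preimage, e.exists_congr_left, e.apply_symm_apply]

lemma exists_king {A : V → V → Prop} (hA : IsOriented A) {P : Set V} (hP : P.Finite)
    (hne : P.Nonempty) (hT : ∀ x ∈ P, ∀ y ∈ P, x ≠ y → Adjacent A x y) :
    ∃ x ∈ P, ∀ y ∈ P, A y x → ∃ u ∈ P, A x u ∧ A u y := by
  obtain ⟨x, hxP, hmax⟩ := Set.exists_max_image P (fun y => (P ∩ Nplus A y).ncard) hP hne
  refine ⟨x, hxP, fun y hyP hyx => ?_⟩
  by_contra! hno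
  have hsub : insert x (P ∩ Nplus A x) ⊆ P ∩ Nplus A y := by
    rintro u (rfl | ⟨huP, hxu⟩)
    · exact ⟨hxP, hyx⟩
    · have huy : u ≠ y := by rintro rfl; exact hA.2 _ _ hyx hxu
      exact ⟨huP, (hT u huP y hyP huy).resolve_left (hno u huP hxu)⟩
  have hx : x ∉ P ∩ Nplus A x := fun h => hA.1 x h.2
  have := Set.ncard_le_ncard hsub (hP.subset Set.inter_subset_left)
  rw [Set.ncard_insert_of_notMem hx (hP.subset Set.inter_subset_left)] at this
  exact absurd (hmax y hyP) (by omega)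

lemma exists_le_of_forall_exists_subset {ι α : Type*} [Nonempty ι] {f g : ι → Set α}
    {w : Set α → ℕ} (hw : Monotone w) (h : ∀ i, ∃ j, f j ⊆ g i ∨ f j ⊆ g j) :
    ∃ i, w (f i) ≤ w (g i) := by
  by_cases hgood : ∃ j, f j ⊆ g j
  · obtain ⟨j, hj⟩ := hgood
    exact ⟨j, hw hj⟩
  let i₀ := Function.argmin (w ∘ f)
  obtain ⟨j, hj | hj⟩ := h i₀
  · exact ⟨i₀, (Function.argmin_le (w ∘ f) j).trans (hw hj)⟩
  · exact absurd ⟨j, hj⟩ hgood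

section Composition

variable {A : V → V → Prop} {B : W → W → Prop} {φ : V → W}

lemma Nminus_eq_preimage_union (hB : ∀ i, ¬ B i i)
    (harc : ∀ x y, φ x ≠ φ y → (A x y ↔ B (φ x) (φ y))) (x : V) :
    Nminus A x = φ ⁻¹' Nminus B (φ x) ∪ {y | A y x ∧ φ y = φ x} := by
  ext y
  by_cases hyx : φ y = φ x
  · simp [Nminus, hyx, hB]
  · simp [Nminus, hyx, harc y x hyx]

lemma preimage_Nsecond_subset (hB : IsOriented B) (hφ : Function.Surjective φ)
    (harc : ∀ x y, φ x ≠ φ y → (A x y ↔ B (φ x) (φ y))) (x : V) :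
    φ ⁻¹' Nsecond B (φ x) ⊆ Nsecond A x := by
  intro z hz
  obtain ⟨⟨v, hxv, hvz⟩, hxz⟩ := mem_Nsecond.1 hz
  obtain ⟨u, rfl⟩ := hφ v
  have hxu : φ x ≠ φ u := fun h => hB.1 _ (h ▸ hxv)
  have huz : φ u ≠ φ z := fun h => hB.1 _ (h ▸ hvz)
  have hxz' : φ x ≠ φ z := fun h => hB.2 _ _ hxv (h ▸ hvz)
  exact mem_Nsecond.2
    ⟨⟨u, (harc x u hxu).2 hxv, (harc u z huz).2 hvz⟩, fun h => hxz ((harc x z hxz').1 h)⟩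

lemma sullivan1_of_ncard_preimage_le [Finite V] (hA : IsOriented A) (hB : IsOriented B)
    (hφ : Function.Surjective φ) (harc : ∀ x y, φ x ≠ φ y → (A x y ↔ B (φ x) (φ y)))
    {x : V} (hking : ∀ y, φ y = φ x → A y x → ∃ u, A x u ∧ A u y)
    (hle : (φ ⁻¹' Nminus B (φ x)).ncard ≤ (φ ⁻¹' Nsecond B (φ x)).ncard) :
    Sullivan1 A x := by
  set Q := {y | A y x ∧ φ y = φ x}
  have hdisj : Disjoint (φ ⁻¹' Nsecond B (φ x)) Q := by
    refine Set.disjoint_left.2 fun y hy hyQ => ?_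
    obtain ⟨⟨v, hxv, hvy⟩, -⟩ := mem_Nsecond.1 hy
    exact hB.2 _ _ hxv (hyQ.2 ▸ hvy)
  have hQ : Q ⊆ Nsecond A x := fun y ⟨hyx, hy⟩ =>
    mem_Nsecond.2 ⟨hking y hy hyx, hA.2 _ _ hyx⟩
  calc dminus A x = (φ ⁻¹' Nminus B (φ x) ∪ Q).ncard := by
        rw [dminus, Nminus_eq_preimage_union hB.1 harc]
    _ ≤ (φ ⁻¹' Nminus B (φ x)).ncard + Q.ncard := Set.ncard_union_le _ _
    _ ≤ (φ ⁻¹' Nsecond B (φ x)).ncard + Q.ncard := by gcongr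
    _ = (φ ⁻¹' Nsecond B (φ x) ∪ Q).ncard := (Set.ncard_union_eq hdisj).symm
    _ ≤ dsecond A x :=
        Set.ncard_le_ncard (Set.union_subset (preimage_Nsecond_subset hB hφ harc x) hQ)

end Composition

end Digraph

section Offset

variable {r : ℕ}

def offset (i j : ZMod r) : ℕ := (j - i).val

lemma offset_eq_zero_iff {i j : ZMod r} : offset i j = 0 ↔ i = j := by
  rw [offset, ZMod.val_eq_zero, sub_eq_zero, eq_comm]

lemma offset_add_natCast (i : ZMod r) (k : ℕ) : offset i (i + k) = k % r := by
  rw [offset, add_sub_cancel_left, ZMod.val_natCast]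

variable [NeZero r]

lemma offset_lt (i j : ZMod r) : offset i j < r := ZMod.val_lt _

lemma add_offset (i j : ZMod r) : i + (offset i j : ZMod r) = j := by
  rw [offset, ZMod.natCast_zmod_val, add_sub_cancel]

lemma offset_add_offset (i j k : ZMod r) :
    offset i j + offset j k = offset i k ∨ offset i j + offset j k = offset i k + r := by
  have hsum : (j - i) + (k - j) = k - i := by ring
  rcases lt_or_ge (offset i j + offset j k) r with h | h
  · left
    rw [offset, offset, ← ZMod.val_add_of_lt h, hsum, offset]
  · right
    rw [offset, offset, ZMod.val_add_val_of_le h, hsum, offset]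

lemma offset_add_offset_swap {i j : ZMod r} (h : i ≠ j) : offset i j + offset j i = r := by
  have := offset_add_offset i j i
  have := offset_lt i j
  have := offset_lt j i
  have := offset_eq_zero_iff.not.2 h
  have := offset_eq_zero_iff.not.2 h.symm
  have : offset i i = 0 := offset_eq_zero_iff.2 rfl
  omega

def HasIntervalOutNbhds (B : ZMod r → ZMod r → Prop) : Prop :=
  ∀ i j k, B i k → j ≠ i → offset i j ≤ offset i k → B i j

lemma IsRoundLabelling.hasIntervalOutNbhds {B : ZMod r → ZMod r → Prop}
    (h : IsRoundLabelling B) : HasIntervalOutNbhds B := by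
  intro i j k hk hji hjk
  have hN := (h i).1
  obtain ⟨t, ⟨-, ht⟩, rfl⟩ : k ∈ (fun t : ℕ => i + (t : ZMod r)) '' Set.Icc 1 (dplus B i) :=
    hN ▸ hk
  show j ∈ Nplus B i
  rw [hN]
  refine ⟨offset i j, ⟨Nat.one_le_iff_ne_zero.2 (offset_eq_zero_iff.not.2 hji.symm), ?_⟩,
    add_offset i j⟩
  rw [offset_add_natCast] at hjk
  exact hjk.trans ((Nat.mod_le t r).trans ht)

open Classical in
noncomputable def reach (B : ZMod r → ZMod r → Prop) (i : ZMod r) : ℕ :=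
  (Finset.univ.filter fun v => ∃ u, B i u ∧ B u v).sup (offset i)

variable {B : ZMod r → ZMod r → Prop} {i j u v : ZMod r}

lemma offset_le_reach (hiu : B i u) (huv : B u v) : offset i v ≤ reach B i := by
  classical
  exact Finset.le_sup (Finset.mem_filter.2 ⟨Finset.mem_univ _, u, hiu, huv⟩)

lemma reach_lt (B : ZMod r → ZMod r → Prop) (i : ZMod r) : reach B i < r :=
  (Finset.sup_lt_iff (NeZero.pos r)).2 fun v _ => offset_lt i v

lemma exists_offset_eq_reach (h : 0 < reach B i) :
    ∃ u v, B i u ∧ B u v ∧ offset i v = reach B i := by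
  classical
  have hne : (Finset.univ.filter fun v => ∃ u, B i u ∧ B u v).Nonempty := by
    by_contra hne
    rw [Finset.not_nonempty_iff_eq_empty] at hne
    simp [reach, hne] at h
  obtain ⟨v, hv, hvr⟩ := Finset.exists_mem_eq_sup _ hne (offset i)
  obtain ⟨u, hiu, huv⟩ := (Finset.mem_filter.1 hv).2
  exact ⟨u, v, hiu, huv, hvr.symm⟩

section Round

variable (hI : HasIntervalOutNbhds B)
include hI

lemma offset_lt_offset_of_arc (hB : IsOriented B) (hiu : B i u) (huv : B u v) :
    offset i u < offset i v := by
  have hui : u ≠ i := fun h => hB.1 i (h ▸ hiu)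
  have huv' : offset u v ≠ 0 := offset_eq_zero_iff.not.2 fun h => hB.1 u (h ▸ huv)
  by_contra! hle
  refine hB.2 _ _ hiu (hI u i v huv hui.symm ?_)
  have := offset_add_offset i u v
  have := offset_add_offset_swap hui.symm
  omega

lemma arc_add_one (hB : IsLocalTournament B) (hj : B j (i + 1)) : B i (i + 1) := by
  have hjt : j ≠ i + 1 := fun h => hB.1.1 j (h ▸ hj)
  have hjt' : offset j (i + 1) ≠ 0 := offset_eq_zero_iff.not.2 hjt
  have hr : 1 < r := lt_of_le_of_lt (Nat.one_le_iff_ne_zero.2 hjt') (offset_lt _ _)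
  have hit : offset i (i + 1) = 1 := by
    simpa [Nat.mod_eq_of_lt hr] using offset_add_natCast i 1
  have hti : i ≠ i + 1 := fun h => by simp [← h, offset_eq_zero_iff.2] at hit
  obtain rfl | hji := eq_or_ne j i
  · exact hj
  have hij : B j i := hI j i _ hj hji.symm (by
    have := offset_add_offset j i (i + 1)
    have := offset_lt j i
    omega)
  refine (hB.2.1 j i _ hij hj hti).resolve_right fun hti' => hB.1.2 _ _ hj ?_
  refine hI _ j i hti' hjt (by
    have := offset_add_offset_swap hti
    have := offset_lt (i + 1) j
    omega)

lemma mem_Nsecond_of_offset_le_reach (hB : IsOriented B) (hji : j ≠ i) (hij : ¬ B i j)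
    (h : offset i j ≤ reach B i) : j ∈ Nsecond B i := by
  have hj0 : offset i j ≠ 0 := offset_eq_zero_iff.not.2 hji.symm
  obtain ⟨u, v, hiu, huv, hv⟩ := exists_offset_eq_reach (i := i) (B := B) (by omega)
  have hu : offset i u < offset i j := by
    by_contra! hle
    exact hij (hI i j u hiu hji hle)
  have huv' := offset_lt_offset_of_arc hI hB hiu huv
  have hju : j ≠ u := by rintro rfl; exact lt_irrefl _ hu
  have huj : B u j := hI u j v huv hju (by
    have := offset_add_offset i u j
    have := offset_add_offset i u v
    have := offset_lt u j
    have := offset_lt u v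
    omega)
  exact mem_Nsecond.2 ⟨⟨u, hiu, huj⟩, hij⟩

lemma Nminus_subset_Nsecond_of_reach_eq (hB : IsOriented B) (h : reach B i = r - 1) :
    Nminus B i ⊆ Nsecond B i := fun v hv =>
  mem_Nsecond_of_offset_le_reach hI hB (fun h => hB.1 _ (h ▸ hv)) (hB.2 _ _ hv)
    (h ▸ Nat.le_pred_of_lt (offset_lt i v))

lemma reach_eq_of_arc_of_reach_add_two_le (hB : IsLocalTournament B) (h0 : 0 < reach B i)
    (hj : offset i j = reach B i + 1) (hvj : B v j) (hv : reach B i + 2 ≤ offset i v) :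
    reach B j = r - 1 := by
  obtain ⟨u, w, hiu, huw, hw⟩ := exists_offset_eq_reach h0
  have hu := offset_lt_offset_of_arc hI hB.1 hiu huw
  have huv : u ≠ v := by rintro rfl; omega
  have huj : u ≠ j := by rintro rfl; omega
  have hvu : B v u := hI v u j hvj huv (by
    have := offset_add_offset i v u
    have := offset_add_offset i v j
    have := offset_lt v u
    have := offset_lt v j
    omega)
  have hnuj : ¬ B u j := fun h => by have := offset_le_reach hiu h; omega
  have hju : B j u := (hB.2.1 v u j hvu hvj huj).resolve_left hnuj
  have := offset_le_reach hju huw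
  have := reach_lt B j
  have := offset_add_offset i j w
  have := offset_lt j w
  omega

lemma mem_Nsecond_of_arc_of_offset_le_reach_add_one (hB : IsOriented B)
    (hj : offset i j = reach B i + 1) (hjw : B j u) (hvj : B v j)
    (hv : offset i v ≤ reach B i + 1) : v ∈ Nsecond B i := by
  have hij : ¬ B i j := fun h => by
    have := offset_lt_offset_of_arc hI hB h hjw
    have := offset_le_reach h hjw
    omega
  have hvj' : offset i v ≠ offset i j := fun h =>
    hB.1 j (by rwa [← add_offset i v, h, add_offset] at hvj)
  have hvi : v ≠ i := by rintro rfl; exact hij hvj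
  have hiv : ¬ B i v := fun h => by have := offset_le_reach h hvj; omega
  exact mem_Nsecond_of_offset_le_reach hI hB hvi hiv (by omega)

end Round

lemma exists_Nminus_subset_Nsecond_of_hasIntervalOutNbhds (hB : IsLocalTournament B)
    (hI : HasIntervalOutNbhds B) (i : ZMod r) :
    ∃ j, Nminus B j ⊆ Nsecond B i ∨ Nminus B j ⊆ Nsecond B j := by
  by_cases hsource : ∃ p, ∀ q, ¬ B q p
  · obtain ⟨p, hp⟩ := hsource
    exact ⟨p, Or.inr fun q hq => (hp q hq).elim⟩
  have hsucc : ∀ v, B v (v + 1) := fun v => by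
    obtain ⟨q, hq⟩ := not_forall_not.1 (not_exists.1 hsource (v + 1))
    exact arc_add_one hI hB hq
  have h0 : 0 < reach B i := Nat.zero_lt_of_lt
    ((offset_lt_offset_of_arc hI hB.1 (hsucc i) (hsucc _)).trans_le
      (offset_le_reach (hsucc i) (hsucc _)))
  rcases Nat.lt_or_ge (reach B i + 1) r with hM | hM
  · set j := i + ((reach B i + 1 : ℕ) : ZMod r)
    have hj : offset i j = reach B i + 1 := by rw [offset_add_natCast, Nat.mod_eq_of_lt hM]
    refine ⟨j, ?_⟩
    by_cases hfar : ∃ v, B v j ∧ reach B i + 2 ≤ offset i v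
    · obtain ⟨v, hvj, hv⟩ := hfar
      exact Or.inr (Nminus_subset_Nsecond_of_reach_eq hI hB.1
        (reach_eq_of_arc_of_reach_add_two_le hI hB h0 hj hvj hv))
    · exact Or.inl fun v hvj => mem_Nsecond_of_arc_of_offset_le_reach_add_one hI hB.1 hj
        (hsucc j) hvj (Nat.lt_succ_iff.1 (not_le.1 fun hv => hfar ⟨v, hvj, hv⟩))
  · exact ⟨i, Or.inl (Nminus_subset_Nsecond_of_reach_eq hI hB.1
      (by have := reach_lt B i; omega))⟩

end Offset

lemma IsRound.exists_Nminus_subset_Nsecond {W : Type*} {B : W → W → Prop}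
    (hB : IsLocalTournament B) (hR : IsRound B) (i : W) :
    ∃ j, Nminus B j ⊆ Nsecond B i ∨ Nminus B j ⊆ Nsecond B j := by
  obtain ⟨r, hr, e, hlab⟩ := hR
  have : NeZero r := ⟨hr.ne'⟩
  obtain ⟨j, hj⟩ := exists_Nminus_subset_Nsecond_of_hasIntervalOutNbhds
    (hB.comap_s7 e.injective) hlab.hasIntervalOutNbhds (e.symm i)
  refine ⟨e j, ?_⟩
  simpa only [Nminus_comap, Nsecond_comap_equiv, e.apply_symm_apply, e.preimage_subset] using hj

/-- Every round decomposable local tournament has a Sullivan-1 vertex. -/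
theorem round_decomposable_has_sullivan1 {V : Type*} [Fintype V]
    (A : V → V → Prop) (hA : IsLocalTournament A)
    (hrd : IsRoundDecomposable A) :
    ∃ x : V, Sullivan1 A x := by
  obtain ⟨r, B, φ, -, hB, hR, hφ, harc, hpart, -⟩ := hrd
  obtain ⟨i, hi⟩ := exists_le_of_forall_exists_subset (w := fun S => (φ ⁻¹' S).ncard)
    (fun S T hST => Set.ncard_le_ncard (Set.preimage_mono hST))
    (hR.exists_Nminus_subset_Nsecond hB)
  obtain ⟨x, hx, hking⟩ := exists_king hA.1 (Set.toFinite (φ ⁻¹' {i})) (hφ i)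
    fun x hx y hy => hpart x y (hx.trans hy.symm)
  refine ⟨x, sullivan1_of_ncard_preimage_le hA.1 hB.1 hφ harc (fun y hy hyx => ?_) (hx ▸ hi)⟩
  obtain ⟨u, -, hxu, huy⟩ := hking y (hy.trans hx) hyx
  exact ⟨u, hxu, huy⟩
end

section
/- Let R be a round local tournament with round labelling u_1, …, u_r, let V_1, …, V_r be nonempty arcless digraphs, and let D* = R[V_1, …, V_r] be the corresponding extension of R. Let v_j ∈ V_j and suppose that the out-neighbourhood of v_j in D* equals V_{j+1} ∪ … ∪ V_k (indices modulo r). Then for every vertex v_k ∈ V_k, one has N+_{D*}(v_k) ⊆ N++_{D*}(v_j), and hence d++_{D*}(v_j) ≥ d+_{D*}(v_k). -/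
/-! The vertex `w ∈ V_k` is an out-neighbour of `v`, so `N⁺(w) ⊆ N⁺⁺(v)` amounts to `N⁺(w)` missing
`N⁺(v) = V_{j+1} ∪ … ∪ V_k`. In a round labelling `N⁺(u_k)` is the interval `u_{k+1}, …, u_{k+d}`;
if it reached some `u_{j+t}` with `t ≤ m` it would have to wrap around the cycle past `u_j`, giving
`u_k → u_j` against `u_j → u_k`. -/

theorem ZMod.le_of_natCast_eq {r a b : ℕ} (hab : (a : ZMod r) = b) (hba : b < a) : r ≤ a := by
  by_contra! har
  have hmod := (ZMod.natCast_eq_natCast_iff' a b r).1 hab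
  rw [Nat.mod_eq_of_lt har, Nat.mod_eq_of_lt (hba.trans har)] at hmod
  omega

theorem Nplus_subset_Nsecond {V : Type*} {A : V → V → Prop} {v w : V} (hvw : w ∈ Nplus A v)
    (hdisj : Disjoint (Nplus A w) (Nplus A v)) : Nplus A w ⊆ Nsecond A v :=
  fun _ hz => ⟨Set.mem_biUnion hvw hz, hdisj.notMem_of_mem_left hz⟩

namespace IsRoundLabelling

variable {r : ℕ} {B : ZMod r → ZMod r → Prop}

theorem adj_add (h : IsRoundLabelling B) {i : ZMod r} {s : ℕ} (hs : s ∈ Set.Icc 1 (dplus B i)) :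
    B i (i + s) := by
  have hmem : i + (s : ZMod r) ∈ Nplus B i := by
    rw [(h i).1]
    exact ⟨s, hs, rfl⟩
  exact hmem

theorem exists_add_eq_of_adj (h : IsRoundLabelling B) {i c : ZMod r} (hic : B i c) :
    ∃ s ∈ Set.Icc 1 (dplus B i), i + (s : ZMod r) = c := by
  have hmem : c ∈ Nplus B i := hic
  rwa [(h i).1] at hmem

theorem not_adj_add_of_adj_add (h : IsRoundLabelling B) (hasym : ∀ x y, B x y → ¬ B y x)
    {i : ZMod r} {m t : ℕ} (hmr : m < r) (htm : t ≤ m) (hfwd : B i (i + m)) :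
    ¬ B (i + m) (i + t) := by
  intro hback
  obtain ⟨s, ⟨hs1, hsd⟩, hs⟩ := h.exists_add_eq_of_adj hback
  have hcast : ((m + s : ℕ) : ZMod r) = t := by
    push_cast
    exact add_left_cancel (a := i) (by rw [← hs, add_assoc])
  have hwrap : r ≤ m + s := ZMod.le_of_natCast_eq hcast (by omega)
  have hreturn : B (i + m) (i + m + ((r - m : ℕ) : ZMod r)) :=
    h.adj_add ⟨by omega, by omega⟩
  rw [Nat.cast_sub hmr.le, ZMod.natCast_self, add_add_sub_cancel, add_zero] at hreturn
  exact hasym _ _ hfwd hreturn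

end IsRoundLabelling

theorem second_neighbourhood_in_extension_of_round_general {V : Type*} [Fintype V]
    (r : ℕ) (hr : 0 < r)
    (B : ZMod r → ZMod r → Prop) (hB : IsLocalTournament B)
    (hround : IsRoundLabelling B)
    (φ : V → ZMod r)
    (Astar : V → V → Prop) (hAstar : ∀ x y, Astar x y ↔ B (φ x) (φ y))
    (j : ZMod r) (v : V) (hv : φ v = j)
    (m : ℕ) (hm : 1 ≤ m)
    (hN : Nplus Astar v = {y : V | ∃ t : ℕ, 1 ≤ t ∧ t ≤ m ∧ φ y = j + (t : ZMod r)}) :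
    ∀ w : V, φ w = j + (m : ZMod r) →
      Nplus Astar w ⊆ Nsecond Astar v ∧ dplus Astar w ≤ dsecond Astar v := by
  obtain ⟨⟨hirr, hasym⟩, -, -⟩ := hB
  subst hv
  have hmr : m < r := by
    by_contra! hrm
    have hvv : v ∈ Nplus Astar v := by
      rw [hN]
      exact ⟨r, hr, hrm, by rw [ZMod.natCast_self, add_zero]⟩
    exact hirr (φ v) ((hAstar v v).1 hvv)
  intro w hw
  have hvw : w ∈ Nplus Astar v := by
    rw [hN]
    exact ⟨m, hm, le_rfl, hw⟩
  have hdisj : Disjoint (Nplus Astar w) (Nplus Astar v) := by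
    rw [Set.disjoint_left, hN]
    rintro z hwz ⟨t, -, htm, hz⟩
    have hfwd : B (φ v) (φ v + m) := hw ▸ (hAstar v w).1 hvw
    have hback : B (φ v + m) (φ v + t) := hw ▸ hz ▸ (hAstar w z).1 hwz
    exact hround.not_adj_add_of_adj_add hasym hmr htm hfwd hback
  have hsub := Nplus_subset_Nsecond hvw hdisj
  exact ⟨hsub, Set.ncard_le_ncard hsub⟩

/-- Let `R` be a round local tournament with round labelling `u_1, …, u_r`
(realized on `ZMod r` with its natural labelling), let `D* = R[V_1, …, V_r]` be the
extension of `R` whose (nonempty, arcless) parts are the fibres of a surjection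
`φ : V → ZMod r`, so `Astar x y ↔ B (φ x) (φ y)`.  Let `v ∈ V_j` and suppose that
`N⁺_{D*}(v) = V_{j+1} ∪ … ∪ V_k` where `k = j + m` (indices modulo `r`).  Then for
every vertex `w ∈ V_k`, `N⁺_{D*}(w) ⊆ N⁺⁺_{D*}(v)`, and hence
`d⁺⁺_{D*}(v) ≥ d⁺_{D*}(w)`. -/
theorem second_neighbourhood_in_extension_of_round {V : Type*} [Fintype V]
    (r : ℕ) (hr : 0 < r)
    (B : ZMod r → ZMod r → Prop) (hB : IsLocalTournament B)
    (hround : IsRoundLabelling B)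
    (φ : V → ZMod r) (hφ : Function.Surjective φ)
    (Astar : V → V → Prop) (hAstar : ∀ x y, Astar x y ↔ B (φ x) (φ y))
    (j : ZMod r) (v : V) (hv : φ v = j)
    (m : ℕ) (hm : 1 ≤ m)
    (hN : Nplus Astar v = {y : V | ∃ t : ℕ, 1 ≤ t ∧ t ≤ m ∧ φ y = j + (t : ZMod r)}) :
    ∀ w : V, φ w = j + (m : ZMod r) →
      Nplus Astar w ⊆ Nsecond Astar v ∧ dplus Astar w ≤ dsecond Astar v :=
  second_neighbourhood_in_extension_of_round_general r hr B hB hround φ Astar hAstar j v hv m hm hN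
end

section
/- Let D be a local tournament with a round decomposition D = R[S_1, …, S_r], where R is a round local tournament on r ≥ 2 vertices and each S_i is a strong tournament with vertex set V_i, and let D* = R[V_1, …, V_r], where each V_i is regarded as an arcless digraph (equivalently, D* is D with all arcs inside the parts V_i deleted). If a vertex v ∈ V_j is a Sullivan-1 vertex of S_j and a Sullivan-1 vertex of D*, then v is a Sullivan-1 vertex of D. -/
/-!
The in-arcs of `v ∈ V_j` split into those coming from `V_j` (the arcs of `S_j`) and those coming
from other parts (the arcs of `D*`), so `d⁻_D(v) = d⁻_{S_j}(v) + d⁻_{D*}(v)`. On the other side,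
`N⁺⁺_{S_j}(v)` and `N⁺⁺_{D*}(v)` are disjoint subsets of `N⁺⁺_D(v)`: the first lies in `V_j`,
the second outside it, because a path `v → u → w` of `D*` ending in `V_j` would give a 2-cycle
`j → φ u → j` of the oriented graph `R`.
-/

theorem mem_Nsecond_iff {V : Type*} {A : V → V → Prop} {x w : V} :
    w ∈ Nsecond A x ↔ (∃ u, A x u ∧ A u w) ∧ ¬ A x w := by
  simp [Nsecond, Nplus]

theorem mem_Nsecond_of_le {V : Type*} {A A' : V → V → Prop} (hle : ∀ a b, A' a b → A a b)
    {x w : V} (hw : w ∈ Nsecond A' x) (hback : A x w → A' x w) : w ∈ Nsecond A x := by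
  obtain ⟨⟨u, hxu, huw⟩, hxw⟩ := mem_Nsecond_iff.mp hw
  exact mem_Nsecond_iff.mpr ⟨⟨u, hle _ _ hxu, hle _ _ huw⟩, fun h => hxw (hback h)⟩

section Parts

variable {V W : Type*} (A : V → V → Prop) (φ : V → W)

/-- The tournament `S_j`: the arcs of `A` inside the part `φ⁻¹ {j}`. -/
def partArcs (j : W) (a b : V) : Prop := A a b ∧ φ a = j ∧ φ b = j

/-- The digraph `D*`: the arcs of `A` between distinct parts. -/
def crossArcs (a b : V) : Prop := A a b ∧ φ a ≠ φ b

variable {A φ} {v : V} {j : W}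

theorem Nminus_eq_partArcs_union_crossArcs (hv : φ v = j) :
    Nminus A v = Nminus (partArcs A φ j) v ∪ Nminus (crossArcs A φ) v := by
  ext a
  simp only [Nminus, partArcs, crossArcs, Set.mem_union, Set.mem_ofPred_eq, hv]
  tauto

theorem disjoint_Nminus_partArcs_crossArcs (hv : φ v = j) :
    Disjoint (Nminus (partArcs A φ j) v) (Nminus (crossArcs A φ) v) :=
  Set.disjoint_left.mpr fun _ ⟨_, haj, _⟩ ⟨_, hne⟩ => hne (haj.trans hv.symm)

theorem dminus_eq_partArcs_add_crossArcs [Finite V] (hv : φ v = j) :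
    dminus A v = dminus (partArcs A φ j) v + dminus (crossArcs A φ) v := by
  rw [dminus, Nminus_eq_partArcs_union_crossArcs hv,
    Set.ncard_union_eq (disjoint_Nminus_partArcs_crossArcs hv)]
  rfl

theorem part_eq_of_mem_Nsecond_partArcs {w : V} (hw : w ∈ Nsecond (partArcs A φ j) v) :
    φ w = j := by
  obtain ⟨⟨_, _, _, _, hwj⟩, _⟩ := mem_Nsecond_iff.mp hw
  exact hwj

theorem Nsecond_partArcs_subset (hv : φ v = j) :
    Nsecond (partArcs A φ j) v ⊆ Nsecond A v := fun _ hw =>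
  mem_Nsecond_of_le (fun _ _ h => h.1) hw
    fun hvw => ⟨hvw, hv, part_eq_of_mem_Nsecond_partArcs hw⟩

theorem part_ne_of_mem_Nsecond_crossArcs {B : W → W → Prop} (hBasymm : ∀ a b, B a b → ¬ B b a)
    (hcomp : ∀ x y, φ x ≠ φ y → (A x y ↔ B (φ x) (φ y))) {w : V}
    (hw : w ∈ Nsecond (crossArcs A φ) v) : φ w ≠ φ v := by
  obtain ⟨⟨u, ⟨hvu, hvu_ne⟩, huw, huw_ne⟩, _⟩ := mem_Nsecond_iff.mp hw
  intro hwv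
  have hBuv : B (φ u) (φ v) := hwv ▸ (hcomp u w huw_ne).mp huw
  exact hBasymm _ _ ((hcomp v u hvu_ne).mp hvu) hBuv

theorem Nsecond_crossArcs_subset {B : W → W → Prop} (hBasymm : ∀ a b, B a b → ¬ B b a)
    (hcomp : ∀ x y, φ x ≠ φ y → (A x y ↔ B (φ x) (φ y))) :
    Nsecond (crossArcs A φ) v ⊆ Nsecond A v := fun _ hw =>
  mem_Nsecond_of_le (fun _ _ h => h.1) hw
    fun hvw => ⟨hvw, (part_ne_of_mem_Nsecond_crossArcs hBasymm hcomp hw).symm⟩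

theorem dsecond_partArcs_add_crossArcs_le [Finite V] {B : W → W → Prop}
    (hBasymm : ∀ a b, B a b → ¬ B b a) (hcomp : ∀ x y, φ x ≠ φ y → (A x y ↔ B (φ x) (φ y)))
    (hv : φ v = j) :
    dsecond (partArcs A φ j) v + dsecond (crossArcs A φ) v ≤ dsecond A v := by
  have hdisj : Disjoint (Nsecond (partArcs A φ j) v) (Nsecond (crossArcs A φ) v) :=
    Set.disjoint_left.mpr fun w hwS hwQ =>
      part_ne_of_mem_Nsecond_crossArcs hBasymm hcomp hwQ
        ((part_eq_of_mem_Nsecond_partArcs hwS).trans hv.symm)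
  rw [dsecond, dsecond, ← Set.ncard_union_eq hdisj]
  exact Set.ncard_le_ncard
    (Set.union_subset (Nsecond_partArcs_subset hv) (Nsecond_crossArcs_subset hBasymm hcomp))

end Parts

theorem sullivan1_of_part_and_quotient_general {V : Type*} [Fintype V]
    (A : V → V → Prop)
    (r : ℕ)
    (B : ZMod r → ZMod r → Prop) (hB : IsLocalTournament B)
    (φ : V → ZMod r)
    (hcomp : ∀ x y, φ x ≠ φ y → (A x y ↔ B (φ x) (φ y)))
    (j : ZMod r) (v : V) (hv : φ v = j)
    (hS : Sullivan1 (fun a b => A a b ∧ φ a = j ∧ φ b = j) v)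
    (hQ : Sullivan1 (fun a b => A a b ∧ φ a ≠ φ b) v) :
    Sullivan1 A v := by
  have hS : Sullivan1 (partArcs A φ j) v := hS
  have hQ : Sullivan1 (crossArcs A φ) v := hQ
  calc dminus A v = dminus (partArcs A φ j) v + dminus (crossArcs A φ) v :=
        dminus_eq_partArcs_add_crossArcs hv
    _ ≤ dsecond (partArcs A φ j) v + dsecond (crossArcs A φ) v := Nat.add_le_add hS hQ
    _ ≤ dsecond A v := dsecond_partArcs_add_crossArcs_le hB.1.2 hcomp hv

/-- Let `D` (with arc relation `A`) be a local tournament with round decomposition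
`D = R[S_1, …, S_r]`: `R` is a round local tournament on `r ≥ 2` vertices realized
on `ZMod r` by the relation `B`, the parts `V_i` are the fibres of the surjection
`φ : V → ZMod r`, arcs between distinct parts are exactly those induced by `B`, and
each part induces a strong tournament `S_i`.  Let `D*` be `D` with all arcs inside
the parts deleted.  If `v ∈ V_j` is a Sullivan-1 vertex of `S_j` and a Sullivan-1
vertex of `D*`, then `v` is a Sullivan-1 vertex of `D`. -/
theorem sullivan1_of_part_and_quotient {V : Type*} [Fintype V]
    (A : V → V → Prop) (hA : IsLocalTournament A)
    (r : ℕ) (hr : 2 ≤ r)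
    (B : ZMod r → ZMod r → Prop) (hB : IsLocalTournament B) (hBround : IsRound B)
    (φ : V → ZMod r) (hφ : Function.Surjective φ)
    (hcomp : ∀ x y, φ x ≠ φ y → (A x y ↔ B (φ x) (φ y)))
    (hpartsTourn : ∀ x y, φ x = φ y → x ≠ y → Adjacent A x y)
    (hpartsStrong : ∀ i : ZMod r, ∀ x y, φ x = i → φ y = i →
      Relation.ReflTransGen (fun a b => A a b ∧ φ a = i ∧ φ b = i) x y)
    (j : ZMod r) (v : V) (hv : φ v = j)
    (hS : Sullivan1 (fun a b => A a b ∧ φ a = j ∧ φ b = j) v)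
    (hQ : Sullivan1 (fun a b => A a b ∧ φ a ≠ φ b) v) :
    Sullivan1 A v :=
  sullivan1_of_part_and_quotient_general A r B hB φ hcomp j v hv hS hQ
end
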